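/- arXiv:math/0010010 — 6 statements merged into one kernel-verified Lean document; each statement's English description precedes it below -/
import Mathlib

section
/- For 0 < p ≤ 1, the supremum over all nonnegative nonincreasing functions f on (0,∞) of (∫₀^∞ f(t) dt)^p / (∫₀^∞ f(t)^p t^{p-1} dt) equals p. -/
/-!
Write `F x = ∫₀ˣ f`. Since `f` is nonincreasing, `x * f x ≤ F x`, and by concavity of `y ↦ y ^ p`
the increment `F (x + Δ) ^ p - F x ^ p` is at most `(f x * (x + Δ)) ^ p - (f x * x) ^ p`, hence
at most `f x ^ p * (x ^ p - (x - Δ) ^ p) ≤ p * ∫_{x-Δ}^x f t ^ p * t ^ (p - 1) dt`. Summing over a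
grid of mesh `Δ` bounds `F T ^ p` by the weighted integral plus the contribution `(M * Δ) ^ p` of
the first cell when `f ≤ M`, which vanishes as `Δ → 0`; truncating `f` and monotone convergence
remove the boundedness. The indicator of `(0, 1]` attains the ratio `p`.
-/

open MeasureTheory Set Filter Topology
open scoped ENNReal NNReal

theorem ConcaveOn.add_le_add_of_le {𝕜 β : Type*} [Field 𝕜] [LinearOrder 𝕜] [IsStrictOrderedRing 𝕜]
    [AddCommMonoid β] [PartialOrder β] [IsOrderedAddMonoid β] [Module 𝕜 β]
    {s : Set 𝕜} {f : 𝕜 → β} (hf : ConcaveOn 𝕜 s f) {u v h : 𝕜} (hu : u ∈ s) (hvh : v + h ∈ s)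
    (huv : u ≤ v) (hh : 0 ≤ h) : f (v + h) + f u ≤ f v + f (u + h) := by
  rcases (add_nonneg (sub_nonneg.2 huv) hh).eq_or_lt with hL | hL
  · obtain ⟨rfl, rfl⟩ : v = u ∧ h = 0 := by constructor <;> linarith
    simp
  set L := v - u + h
  have hv : (h / L) • u + ((v - u) / L) • (v + h) = v := by
    simp only [smul_eq_mul]; field_simp; ring
  have huh : ((v - u) / L) • u + (h / L) • (v + h) = u + h := by
    simp only [smul_eq_mul]; field_simp; ring
  have hsum : h / L + (v - u) / L = 1 := by rw [← add_div, add_comm, div_self hL.ne']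
  have h₁ := hf.2 hu hvh (div_nonneg hh hL.le) (div_nonneg (sub_nonneg.2 huv) hL.le) hsum
  have h₂ := hf.2 hu hvh (div_nonneg (sub_nonneg.2 huv) hL.le) (div_nonneg hh hL.le)
    ((add_comm _ _).trans hsum)
  rw [hv] at h₁
  rw [huh] at h₂
  calc f (v + h) + f u = (h / L + (v - u) / L) • f u + ((v - u) / L + h / L) • f (v + h) := by
        rw [hsum, add_comm ((v - u) / L), hsum, one_smul, one_smul, add_comm]
    _ = ((h / L) • f u + ((v - u) / L) • f (v + h)) +
          (((v - u) / L) • f u + (h / L) • f (v + h)) := by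
        simp only [add_smul]; abel
    _ ≤ f v + f (u + h) := add_le_add h₁ h₂

theorem ENNReal.rpow_add_add_rpow_le_of_le {p : ℝ} (hp0 : 0 < p) (hp1 : p ≤ 1) {u s h : ℝ≥0∞}
    (hus : u ≤ s) : (s + h) ^ p + u ^ p ≤ s ^ p + (u + h) ^ p := by
  rcases eq_or_ne s ∞ with rfl | hs
  · simp [top_rpow_of_pos hp0]
  rcases eq_or_ne h ∞ with rfl | hh
  · simp [top_rpow_of_pos hp0]
  lift s to ℝ≥0 using hs
  lift h to ℝ≥0 using hh
  lift u to ℝ≥0 using ne_top_of_le_ne_top coe_ne_top hus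
  simp only [← coe_add, ← coe_rpow_of_nonneg _ hp0.le, coe_le_coe, ← NNReal.coe_le_coe]
  push_cast
  exact (Real.concaveOn_rpow hp0.le hp1).add_le_add_of_le u.2 (add_nonneg s.2 h.2 : (0 : ℝ) ≤ _)
    (by exact_mod_cast hus) h.2

theorem lintegral_Ioc_ofReal_rpow_sub_one {p a b : ℝ} (hp : 0 < p) (ha : 0 ≤ a) (hab : a ≤ b) :
    ∫⁻ t in Ioc a b, ENNReal.ofReal (t ^ (p - 1)) = ENNReal.ofReal ((b ^ p - a ^ p) / p) := by
  have hp1 : -1 < p - 1 := by linarith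
  have hint : IntegrableOn (fun t : ℝ => t ^ (p - 1)) (Ioc a b) :=
    (intervalIntegrable_iff_integrableOn_Ioc_of_le hab).1
      (intervalIntegral.intervalIntegrable_rpow' hp1)
  rw [← ofReal_integral_eq_lintegral_ofReal hint, ← intervalIntegral.integral_of_le hab,
    integral_rpow (Or.inl hp1), sub_add_cancel]
  filter_upwards [ae_restrict_mem measurableSet_Ioc] with t ht
  exact Real.rpow_nonneg (ha.trans ht.1.le) _

section

variable {p : ℝ} {f : ℝ → ℝ≥0∞}

theorem AntitoneOn.mul_le_setLIntegral_Ioc_zero (hf : AntitoneOn f (Ioi 0)) {x : ℝ} (hx : 0 < x) :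
    f x * ENNReal.ofReal x ≤ ∫⁻ t in Ioc 0 x, f t := by
  calc f x * ENNReal.ofReal x = ∫⁻ _ in Ioc 0 x, f x := by simp
    _ ≤ ∫⁻ t in Ioc 0 x, f t := setLIntegral_mono' measurableSet_Ioc fun t ht => hf ht.1 hx ht.2

theorem AntitoneOn.setLIntegral_Ioc_le_mul (hf : AntitoneOn f (Ioi 0)) {a b : ℝ} (ha : 0 < a) :
    ∫⁻ t in Ioc a b, f t ≤ f a * ENNReal.ofReal (b - a) := by
  calc ∫⁻ t in Ioc a b, f t ≤ ∫⁻ _ in Ioc a b, f a :=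
        setLIntegral_mono' measurableSet_Ioc fun t ht => hf ha (ha.trans ht.1) ht.1.le
    _ = f a * ENNReal.ofReal (b - a) := by simp

theorem rpow_mul_ofReal_sub_le_setLIntegral (hp : 0 < p) {a b : ℝ} {c : ℝ≥0∞} (ha : 0 ≤ a)
    (hab : a ≤ b) (hc : ∀ t ∈ Ioc a b, c ≤ f t) :
    c ^ p * ENNReal.ofReal (b ^ p - a ^ p) ≤
      ENNReal.ofReal p * ∫⁻ t in Ioc a b, f t ^ p * ENNReal.ofReal (t ^ (p - 1)) := by
  calc c ^ p * ENNReal.ofReal (b ^ p - a ^ p)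
      = ENNReal.ofReal p * ∫⁻ t in Ioc a b, c ^ p * ENNReal.ofReal (t ^ (p - 1)) := by
        rw [lintegral_const_mul _ (by fun_prop), lintegral_Ioc_ofReal_rpow_sub_one hp ha hab,
          mul_left_comm, ← ENNReal.ofReal_mul hp.le, mul_div_cancel₀ _ hp.ne']
    _ ≤ _ := by
        gcongr 1
        exact setLIntegral_mono' measurableSet_Ioc fun t ht => by gcongr; exact hc t ht

theorem AntitoneOn.rpow_setLIntegral_Ioc_add_add_le (hp0 : 0 < p) (hp1 : p ≤ 1)
    (hf : AntitoneOn f (Ioi 0)) {a Δ : ℝ} (ha : 0 ≤ a) (hΔ : 0 < Δ) (hfin : f (a + Δ) ≠ ∞) :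
    (∫⁻ t in Ioc 0 (a + Δ + Δ), f t) ^ p ≤ (∫⁻ t in Ioc 0 (a + Δ), f t) ^ p +
      ENNReal.ofReal p * ∫⁻ t in Ioc a (a + Δ), f t ^ p * ENNReal.ofReal (t ^ (p - 1)) := by
  set F := ∫⁻ t in Ioc 0 (a + Δ), f t
  set G := ENNReal.ofReal p * ∫⁻ t in Ioc a (a + Δ), f t ^ p * ENNReal.ofReal (t ^ (p - 1))
  set c := f (a + Δ)
  have hb : 0 < a + Δ := by positivity
  have hsplit : ∫⁻ t in Ioc 0 (a + Δ + Δ), f t ≤ F + c * ENNReal.ofReal Δ := by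
    rw [← Ioc_union_Ioc_eq_Ioc hb.le (by linarith)]
    calc _ ≤ F + ∫⁻ t in Ioc (a + Δ) (a + Δ + Δ), f t := lintegral_union_le _ _ _
      _ ≤ F + c * ENNReal.ofReal Δ := by
        gcongr; simpa using hf.setLIntegral_Ioc_le_mul hb (b := a + Δ + Δ)
  have hincr : (c * ENNReal.ofReal (a + Δ + Δ)) ^ p ≤ (c * ENNReal.ofReal (a + Δ)) ^ p + G := by
    have hmono : a ^ p ≤ (a + Δ) ^ p := Real.rpow_le_rpow ha (by linarith) hp0.le
    have hgrid : (a + Δ + Δ) ^ p + a ^ p ≤ (a + Δ) ^ p + (a + Δ) ^ p :=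
      (Real.concaveOn_rpow hp0.le hp1).add_le_add_of_le ha (by simp only [mem_Ici]; positivity)
        (by linarith) hΔ.le
    calc (c * ENNReal.ofReal (a + Δ + Δ)) ^ p = c ^ p * ENNReal.ofReal ((a + Δ + Δ) ^ p) := by
          rw [ENNReal.mul_rpow_of_nonneg _ _ hp0.le,
            ENNReal.ofReal_rpow_of_nonneg (by positivity) hp0.le]
      _ ≤ c ^ p * ENNReal.ofReal ((a + Δ) ^ p + ((a + Δ) ^ p - a ^ p)) := by
          gcongr; linarith
      _ = (c * ENNReal.ofReal (a + Δ)) ^ p + c ^ p * ENNReal.ofReal ((a + Δ) ^ p - a ^ p) := by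
          rw [ENNReal.ofReal_add (by positivity) (sub_nonneg.2 hmono), mul_add,
            ENNReal.mul_rpow_of_nonneg _ _ hp0.le, ENNReal.ofReal_rpow_of_nonneg hb.le hp0.le]
      _ ≤ _ := by
          gcongr
          exact rpow_mul_ofReal_sub_le_setLIntegral hp0 ha (by linarith)
            fun t ht => hf (ha.trans_lt ht.1) hb ht.2
  have hconcF := ENNReal.rpow_add_add_rpow_le_of_le hp0 hp1 (h := c * ENNReal.ofReal Δ)
    (hf.mul_le_setLIntegral_Ioc_zero hb)
  rw [← mul_add, ← ENNReal.ofReal_add hb.le hΔ.le] at hconcF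
  have hfin' : (c * ENNReal.ofReal (a + Δ)) ^ p ≠ ∞ := by
    apply ENNReal.rpow_ne_top_of_nonneg hp0.le
    exact ENNReal.mul_ne_top hfin ENNReal.ofReal_ne_top
  refine (ENNReal.add_le_add_iff_right hfin').1 ?_
  calc (∫⁻ t in Ioc 0 (a + Δ + Δ), f t) ^ p + (c * ENNReal.ofReal (a + Δ)) ^ p
      ≤ (F + c * ENNReal.ofReal Δ) ^ p + (c * ENNReal.ofReal (a + Δ)) ^ p := by gcongr
    _ ≤ F ^ p + (c * ENNReal.ofReal (a + Δ + Δ)) ^ p := hconcF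
    _ ≤ F ^ p + ((c * ENNReal.ofReal (a + Δ)) ^ p + G) := by gcongr
    _ = F ^ p + G + (c * ENNReal.ofReal (a + Δ)) ^ p := by ring

theorem AntitoneOn.rpow_setLIntegral_Ioc_le_add (hp0 : 0 < p) (hp1 : p ≤ 1)
    (hf : AntitoneOn f (Ioi 0)) (hfin : ∀ t, 0 < t → f t ≠ ∞) {Δ : ℝ} (hΔ : 0 < Δ) (n : ℕ) :
    (∫⁻ t in Ioc 0 ((n + 1) * Δ), f t) ^ p ≤ (∫⁻ t in Ioc 0 Δ, f t) ^ p +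
      ENNReal.ofReal p * ∫⁻ t in Ioc 0 (n * Δ), f t ^ p * ENNReal.ofReal (t ^ (p - 1)) := by
  induction n with
  | zero => simp
  | succ n ih =>
    have hstep := hf.rpow_setLIntegral_Ioc_add_add_le hp0 hp1 (a := n * Δ) (by positivity) hΔ
      (hfin _ (by positivity))
    have hn : (n : ℝ) * Δ + Δ = (n + 1) * Δ := by ring
    rw [hn] at hstep
    push_cast
    calc (∫⁻ t in Ioc 0 ((n + 1 + 1) * Δ), f t) ^ p
        ≤ (∫⁻ t in Ioc 0 ((n + 1) * Δ), f t) ^ p +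
          ENNReal.ofReal p *
            ∫⁻ t in Ioc (n * Δ) ((n + 1) * Δ), f t ^ p * ENNReal.ofReal (t ^ (p - 1)) := by
          convert hstep using 5; ring
      _ ≤ _ := by
          grw [ih, add_assoc, ← mul_add, ← lintegral_union measurableSet_Ioc
            (Ioc_disjoint_Ioc_of_le le_rfl), Ioc_union_Ioc_eq_Ioc (by positivity) (by nlinarith)]

theorem AntitoneOn.rpow_setLIntegral_Ioc_le_of_le (hp0 : 0 < p) (hp1 : p ≤ 1)
    (hf : AntitoneOn f (Ioi 0)) {M : ℝ≥0∞} (hM : M ≠ ∞) (hfM : ∀ t, 0 < t → f t ≤ M)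
    {T : ℝ} (hT : 0 < T) :
    (∫⁻ t in Ioc 0 T, f t) ^ p ≤
      ENNReal.ofReal p * ∫⁻ t in Ioi 0, f t ^ p * ENNReal.ofReal (t ^ (p - 1)) := by
  set R := ENNReal.ofReal p * ∫⁻ t in Ioi 0, f t ^ p * ENNReal.ofReal (t ^ (p - 1))
  have hbound (n : ℕ) : (∫⁻ t in Ioc 0 T, f t) ^ p ≤
      (M * ENNReal.ofReal (T * (1 / (n + 1)))) ^ p + R := by
    set Δ := T * (1 / ((n : ℝ) + 1))
    have hΔ : 0 < Δ := by positivity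
    have hT : ((n : ℝ) + 1) * Δ = T := by simp only [Δ]; field_simp
    calc (∫⁻ t in Ioc 0 T, f t) ^ p = (∫⁻ t in Ioc 0 ((n + 1) * Δ), f t) ^ p := by rw [hT]
      _ ≤ _ := hf.rpow_setLIntegral_Ioc_le_add hp0 hp1
          (fun t ht => ne_top_of_le_ne_top hM (hfM t ht)) hΔ n
      _ ≤ (M * ENNReal.ofReal Δ) ^ p + R := by
          gcongr
          · calc ∫⁻ t in Ioc 0 Δ, f t ≤ ∫⁻ _ in Ioc 0 Δ, M :=
                  setLIntegral_mono' measurableSet_Ioc fun t ht => hfM t ht.1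
              _ = M * ENNReal.ofReal Δ := by simp
          · exact mul_le_mul_right (lintegral_mono_set fun t ht => ht.1) _
  have hlim : Tendsto (fun n : ℕ => (M * ENNReal.ofReal (T * (1 / (n + 1)))) ^ p + R)
      atTop (𝓝 R) := by
    have hcont : Continuous fun x : ℝ => (M * ENNReal.ofReal (T * x)) ^ p :=
      (ENNReal.continuous_rpow_const.comp ((ENNReal.continuous_const_mul hM).comp
        (ENNReal.continuous_ofReal.comp (continuous_const_mul T))))
    have := (hcont.tendsto 0).comp tendsto_one_div_add_atTop_nhds_zero_nat
    simpa [ENNReal.zero_rpow_of_pos hp0] using this.add_const R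
  exact ge_of_tendsto' hlim hbound

theorem AntitoneOn.rpow_setLIntegral_Ioi_le (hp0 : 0 < p) (hp1 : p ≤ 1) (hfm : Measurable f)
    (hf : AntitoneOn f (Ioi 0)) :
    (∫⁻ t in Ioi 0, f t) ^ p ≤
      ENNReal.ofReal p * ∫⁻ t in Ioi 0, f t ^ p * ENNReal.ofReal (t ^ (p - 1)) := by
  have hIoi : ⋃ m : ℕ, Ioc (0 : ℝ) (m + 1) = Ioi 0 :=
    iUnion_Ioc_eq_Ioi_self_iff.2 fun x _ => ⟨⌈x⌉₊, by linarith [Nat.le_ceil x]⟩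
  have htrunc (T : ℝ) : ∫⁻ t in Ioc 0 T, f t = ⨆ n : ℕ, ∫⁻ t in Ioc 0 T, min (f t) n := by
    rw [← lintegral_iSup (fun n => hfm.min measurable_const)
      fun m n hmn t => min_le_min_left (f t) (Nat.cast_le.2 hmn)]
    simp_rw [← inf_iSup_eq, ENNReal.iSup_natCast, inf_top_eq]
  have hsup : ∫⁻ t in Ioi 0, f t = ⨆ (m : ℕ) (n : ℕ), ∫⁻ t in Ioc 0 ((m : ℝ) + 1), min (f t) n := by
    rw [← hIoi, setLIntegral_iUnion_of_directed _ (Monotone.directed_le fun m n hmn =>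
      Ioc_subset_Ioc_right (by exact_mod_cast Nat.add_le_add_right hmn 1))]
    simp_rw [htrunc]
  rw [hsup, ← ENNReal.le_rpow_inv_iff hp0]
  refine iSup₂_le fun m n => (ENNReal.le_rpow_inv_iff hp0).2 ?_
  calc (∫⁻ t in Ioc 0 ((m : ℝ) + 1), min (f t) n) ^ p
      ≤ ENNReal.ofReal p * ∫⁻ t in Ioi 0, min (f t) n ^ p * ENNReal.ofReal (t ^ (p - 1)) :=
        AntitoneOn.rpow_setLIntegral_Ioc_le_of_le hp0 hp1
          (fun x hx y hy hxy => min_le_min_right _ (hf hx hy hxy)) (ENNReal.natCast_ne_top n)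
          (fun t _ => min_le_right _ _) (by positivity)
    _ ≤ _ := by gcongr; exact min_le_left _ _

end

theorem antitoneOn_indicator_Ioc_zero (a : ℝ) :
    AntitoneOn ((Ioc 0 a).indicator 1 : ℝ → ℝ≥0∞) (Ioi 0) := by
  intro x hx y _ hxy
  by_cases hy : y ∈ Ioc 0 a
  · simp [hy, indicator_of_mem (show x ∈ Ioc 0 a from ⟨hx, hxy.trans hy.2⟩)]
  · simp [hy]

theorem setLIntegral_Ioi_indicator_Ioc_zero (a : ℝ) :
    ∫⁻ t in Ioi 0, (Ioc 0 a).indicator 1 t = ENNReal.ofReal a := by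
  rw [lintegral_indicator_one measurableSet_Ioc, Measure.restrict_apply measurableSet_Ioc,
    inter_eq_left.2 Ioc_subset_Ioi_self, Real.volume_Ioc, sub_zero]

theorem setLIntegral_Ioi_indicator_Ioc_zero_rpow_mul {p : ℝ} (hp : 0 < p) {a : ℝ} (ha : 0 ≤ a) :
    ∫⁻ t in Ioi 0, (Ioc 0 a).indicator 1 t ^ p * ENNReal.ofReal (t ^ (p - 1)) =
      ENNReal.ofReal (a ^ p / p) := by
  have hindic : (fun t : ℝ => (Ioc 0 a).indicator 1 t ^ p * ENNReal.ofReal (t ^ (p - 1))) =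
      (Ioc 0 a).indicator fun t => ENNReal.ofReal (t ^ (p - 1)) := by
    ext t
    by_cases ht : t ∈ Ioc 0 a <;> simp [ht, ENNReal.zero_rpow_of_pos hp]
  rw [hindic, lintegral_indicator measurableSet_Ioc, Measure.restrict_restrict measurableSet_Ioc,
    inter_eq_left.2 Ioc_subset_Ioi_self, lintegral_Ioc_ofReal_rpow_sub_one hp le_rfl ha,
    Real.zero_rpow hp.ne', sub_zero]

/-- For `0 < p ≤ 1`, the supremum over all nonnegative nonincreasing functions `f` on `(0,∞)`
(with finite nonzero denominator) of `(∫₀^∞ f)^p / (∫₀^∞ f^p t^{p-1})` equals `p`. -/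
theorem stmt0 (p : ℝ) (hp0 : 0 < p) (hp1 : p ≤ 1) :
    (⨆ f ∈ {f : ℝ → ℝ≥0∞ | Measurable f ∧ AntitoneOn f (Set.Ioi 0) ∧
        (∫⁻ t in Set.Ioi (0:ℝ), f t ^ p * ENNReal.ofReal (t ^ (p - 1))) ≠ 0 ∧
        (∫⁻ t in Set.Ioi (0:ℝ), f t ^ p * ENNReal.ofReal (t ^ (p - 1))) ≠ ⊤},
      (∫⁻ t in Set.Ioi (0:ℝ), f t) ^ p /
        (∫⁻ t in Set.Ioi (0:ℝ), f t ^ p * ENNReal.ofReal (t ^ (p - 1)))) =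
    ENNReal.ofReal p := by
  apply le_antisymm
  · refine iSup₂_le fun f ⟨hfm, hf, hD0, hDtop⟩ => ?_
    rw [ENNReal.div_le_iff hD0 hDtop]
    exact hf.rpow_setLIntegral_Ioi_le hp0 hp1 hfm
  · have hD := setLIntegral_Ioi_indicator_Ioc_zero_rpow_mul hp0 zero_le_one
    rw [Real.one_rpow, one_div] at hD
    refine le_iSup₂_of_le ((Ioc (0 : ℝ) 1).indicator 1)
      ⟨measurable_one.indicator measurableSet_Ioc, antitoneOn_indicator_Ioc_zero 1,
        by simp [hD, hp0], by simp [hD]⟩ ?_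
    rw [hD, setLIntegral_Ioi_indicator_Ioc_zero 1, ENNReal.ofReal_one, ENNReal.one_rpow,
      ENNReal.ofReal_inv_of_pos hp0, one_div, inv_inv]
end

section
/- Let f be a nonnegative simple function on a measure space X written as f = Σ_{n=1}^N a_n χ_{B_n} with a_n > 0 and B_1 ⊂ B_2 ⊂ ... ⊂ B_N measurable. If T is a sublinear operator (|T(Σ α_i f_i)(y)| ≤ Σ |α_i||T f_i(y)| a.e. whenever all functions involved lie in its domain) with T(0) = 0 a.e., then |Tf(y)| ≤ ∫₀^∞ |T χ_{{f > t}}(y)| dt for a.e. y. -/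
open MeasureTheory Set Function
open scoped ENNReal

/-!
Writing `f = ∑ aₖ χ_{Bₖ}` with nested `Bₖ`, the superlevel set `{f > t}` equals `Bₖ` for `t` in
the interval `(∑_{i > k} aᵢ, ∑_{i ≥ k} aᵢ)`, of length `aₖ`. These intervals are disjoint and lie
in `(0, ∞)`, so `∑ aₖ |T χ_{Bₖ}(y)| ≤ ∫₀^∞ |T χ_{f > t}(y)| dt`, while sublinearity bounds
`|Tf(y)|` by the left-hand side.
-/

section Layers

variable {ι : Type*} [LinearOrder ι] [LocallyFiniteOrderTop ι] (a : ι → ℝ)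

def layer (k : ι) : Set ℝ :=
  Ioo (∑ i > k, a i) (∑ i ≥ k, a i)

variable {a}

theorem measurableSet_layer (k : ι) : MeasurableSet (layer a k) :=
  measurableSet_Ioo

theorem volume_layer (k : ι) : volume (layer a k) = ENNReal.ofReal (a k) := by
  rw [layer, Real.volume_Ioo, ← Finset.sum_Ioi_add_eq_sum_Ici, add_sub_cancel_left]

theorem layer_subset_Ioi (ha : ∀ i, 0 ≤ a i) (k : ι) : layer a k ⊆ Ioi 0 :=
  fun _ ht => (Finset.sum_nonneg fun i _ => ha i).trans_lt ht.1

theorem pairwise_disjoint_layer (ha : ∀ i, 0 ≤ a i) : Pairwise (Disjoint on layer a) := by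
  refine (pairwise_disjoint_on _).2 fun k j hkj => ?_
  have hle : ∑ i ≥ j, a i ≤ ∑ i > k, a i :=
    Finset.sum_le_sum_of_subset_of_nonneg
      (fun i hi => Finset.mem_Ioi.2 (hkj.trans_le (Finset.mem_Ici.1 hi))) fun i _ _ => ha i
  exact disjoint_left.2 fun t htk htj => (htj.2.trans_le hle).not_gt htk.1

variable [Fintype ι] {α : Type*} {B : ι → Set α}

theorem sum_Ici_le_sum_mul_indicator (ha : ∀ i, 0 ≤ a i) (hB : Monotone B) {k : ι} {x : α}
    (hx : x ∈ B k) : ∑ i ≥ k, a i ≤ ∑ i, a i * (B i).indicator 1 x := by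
  calc ∑ i ≥ k, a i = ∑ i ≥ k, a i * (B i).indicator 1 x :=
        Finset.sum_congr rfl fun i hi => by
          rw [indicator_of_mem (hB (Finset.mem_Ici.1 hi) hx), Pi.one_apply, mul_one]
    _ ≤ ∑ i, a i * (B i).indicator 1 x :=
        Finset.sum_le_sum_of_subset_of_nonneg (Finset.subset_univ _) fun i _ _ =>
          mul_nonneg (ha i) (indicator_nonneg (fun _ _ => zero_le_one) x)

theorem sum_mul_indicator_le_sum_Ioi (ha : ∀ i, 0 ≤ a i) (hB : Monotone B) {k : ι} {x : α}
    (hx : x ∉ B k) : ∑ i, a i * (B i).indicator 1 x ≤ ∑ i > k, a i := by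
  calc ∑ i, a i * (B i).indicator 1 x = ∑ i > k, a i * (B i).indicator 1 x := by
        refine (Finset.sum_subset (Finset.subset_univ _) fun i _ hi => ?_).symm
        have hik : i ≤ k := not_lt.1 fun h => hi (Finset.mem_Ioi.2 h)
        rw [indicator_of_notMem fun h => hx (hB hik h), mul_zero]
    _ ≤ ∑ i > k, a i :=
        Finset.sum_le_sum fun i _ => mul_le_of_le_one_right (ha i)
          (indicator_le_self' (fun _ _ => zero_le_one) x)

theorem setOf_lt_sum_mul_indicator (ha : ∀ i, 0 ≤ a i) (hB : Monotone B) {k : ι} {t : ℝ}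
    (ht : t ∈ layer a k) : {x | t < ∑ i, a i * (B i).indicator 1 x} = B k := by
  ext x
  refine ⟨fun hx => ?_, fun hx => ht.2.trans_le (sum_Ici_le_sum_mul_indicator ha hB hx)⟩
  by_contra hxB
  exact (ht.1.trans hx).not_ge (sum_mul_indicator_le_sum_Ioi ha hB hxB)

theorem sum_ofReal_mul_le_lintegral_superlevel (ha : ∀ i, 0 ≤ a i) (hB : Monotone B)
    (Φ : Set α → ℝ≥0∞) :
    ∑ k, ENNReal.ofReal (a k) * Φ (B k) ≤
      ∫⁻ t in Ioi 0, Φ {x | t < ∑ i, a i * (B i).indicator 1 x} := by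
  calc ∑ k, ENNReal.ofReal (a k) * Φ (B k)
      = ∑ k, ∫⁻ t in layer a k, Φ {x | t < ∑ i, a i * (B i).indicator 1 x} := by
        refine Finset.sum_congr rfl fun k _ => ?_
        rw [setLIntegral_congr_fun (measurableSet_layer k) fun t ht => by
          rw [setOf_lt_sum_mul_indicator ha hB ht], setLIntegral_const, volume_layer, mul_comm]
    _ = ∫⁻ t in ⋃ k, layer a k, Φ {x | t < ∑ i, a i * (B i).indicator 1 x} := by
        rw [lintegral_iUnion measurableSet_layer (pairwise_disjoint_layer ha),
          tsum_fintype]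
    _ ≤ ∫⁻ t in Ioi 0, Φ {x | t < ∑ i, a i * (B i).indicator 1 x} :=
        lintegral_mono_set (iUnion_subset (layer_subset_Ioi ha))

end Layers

theorem stmt1_general {α β : Type*} [MeasurableSpace β]
    (ν : Measure β)
    (D : Set (α → ℝ)) (T : (α → ℝ) → β → ℝ)
    (N : ℕ) (a : Fin N → ℝ) (ha : ∀ i, 0 < a i)
    (B : Fin N → Set α)
    (hBmono : ∀ i j : Fin N, i ≤ j → B i ⊆ B j)
    (f : α → ℝ) (hf : f = fun x => ∑ i : Fin N, a i * (B i).indicator 1 x)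
    (hfD : f ∈ D) (hBD : ∀ i, (fun x => (B i).indicator (1 : α → ℝ) x) ∈ D)
    (hsub : ∀ (m : ℕ) (c : Fin m → ℝ) (g : Fin m → α → ℝ),
      (∀ i, g i ∈ D) → (fun x => ∑ i, c i * g i x) ∈ D →
      ∀ᵐ y ∂ν, |T (fun x => ∑ i, c i * g i x) y| ≤ ∑ i, |c i| * |T (g i) y|) :
    ∀ᵐ y ∂ν, ENNReal.ofReal |T f y| ≤
      ∫⁻ t in Set.Ioi (0:ℝ),
        ENNReal.ofReal |T (fun x => ({x : α | t < f x}).indicator (1 : α → ℝ) x) y| := by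
  subst hf
  filter_upwards [hsub N a (fun i x => (B i).indicator 1 x) hBD hfD] with y hy
  calc ENNReal.ofReal |T _ y|
      ≤ ENNReal.ofReal (∑ i, |a i| * |T (fun x => (B i).indicator 1 x) y|) :=
        ENNReal.ofReal_le_ofReal hy
    _ = ∑ i, ENNReal.ofReal (a i) * ENNReal.ofReal |T (fun x => (B i).indicator 1 x) y| := by
        rw [ENNReal.ofReal_sum_of_nonneg fun i _ => by positivity]
        exact Finset.sum_congr rfl fun i _ => by
          rw [abs_of_pos (ha i), ENNReal.ofReal_mul (ha i).le]
    _ ≤ _ := sum_ofReal_mul_le_lintegral_superlevel (fun i => (ha i).le)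
        (fun i j hij => hBmono i j hij)
        fun s => ENNReal.ofReal |T (fun x => s.indicator 1 x) y|

/-- If `f = Σ aₙ χ_{Bₙ}` is a nonnegative simple function with `aₙ > 0` and nested measurable
sets `B₁ ⊆ B₂ ⊆ ⋯ ⊆ B_N`, and `T` is a sublinear operator (on a class `D` containing `f` and
the indicators of the `Bₙ`) with `T 0 = 0` a.e., then
`|Tf(y)| ≤ ∫₀^∞ |T χ_{{f > t}}(y)| dt` for a.e. `y`. -/
theorem stmt1 {α β : Type*} [MeasurableSpace α] [MeasurableSpace β]
    (μ : Measure α) (ν : Measure β) [SigmaFinite μ] [SigmaFinite ν]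
    (D : Set (α → ℝ)) (T : (α → ℝ) → β → ℝ)
    (N : ℕ) (a : Fin N → ℝ) (ha : ∀ i, 0 < a i)
    (B : Fin N → Set α) (hBmeas : ∀ i, MeasurableSet (B i))
    (hBmono : ∀ i j : Fin N, i ≤ j → B i ⊆ B j)
    (f : α → ℝ) (hf : f = fun x => ∑ i : Fin N, a i * (B i).indicator 1 x)
    (hfD : f ∈ D) (hBD : ∀ i, (fun x => (B i).indicator (1 : α → ℝ) x) ∈ D)
    (hzero : ∀ᵐ y ∂ν, T 0 y = 0)
    (hsub : ∀ (m : ℕ) (c : Fin m → ℝ) (g : Fin m → α → ℝ),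
      (∀ i, g i ∈ D) → (fun x => ∑ i, c i * g i x) ∈ D →
      ∀ᵐ y ∂ν, |T (fun x => ∑ i, c i * g i x) y| ≤ ∑ i, |c i| * |T (g i) y|) :
    ∀ᵐ y ∂ν, ENNReal.ofReal |T f y| ≤
      ∫⁻ t in Set.Ioi (0:ℝ),
        ENNReal.ofReal |T (fun x => ({x : α | t < f x}).indicator (1 : α → ℝ) x) y| :=
  stmt1_general ν D T N a ha B hBmono f hf hfD hBD hsub
end

section
/- Let w = (w(n))_{n≥0} be a sequence of positive numbers and W(n) = Σ_{k=0}^n w(k). For 0 < p < ∞, the discrete Hardy operator A_d f(n) = (1/(n+1)) Σ_{k=0}^n f(k) maps ℓ^{p,∞}_dec(w) boundedly into ℓ^{p,∞}(w) if and only if Σ_{k=0}^n W(k)^{-1/p} ≤ C (n+1) W(n)^{-1/p} for all n ≥ 0. -/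
/-!
Since `A_d` is positive and linear, every `f` with `sup_n φ(n) f(n) ≤ M` is dominated pointwise by
`M` times the extremal sequence `1/φ`, hence `A_d f ≤ M · A_d(1/φ)`. So `A_d` is bounded on
nonincreasing sequences iff it maps `1/φ` (itself nonincreasing, of norm one) into the weak space,
and with `φ = W^{1/p}` that is exactly the stated growth condition on `Σ_{k≤n} W(k)^{-1/p}`.
-/

open scoped ENNReal NNReal

namespace DiscreteHardy

/-- With `φ = W^{1/p}` this is the `ℓ^{p,∞}(w)` quasi-norm of a nonincreasing sequence. -/
noncomputable def weakNorm (φ : ℕ → ℝ) (f : ℕ → ℝ≥0∞) : ℝ≥0∞ :=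
  ⨆ n, ENNReal.ofReal (φ n) * f n

noncomputable def hardyAvg (f : ℕ → ℝ≥0∞) (n : ℕ) : ℝ≥0∞ :=
  (∑ k ∈ Finset.range (n + 1), f k) / ((n : ℝ≥0∞) + 1)

noncomputable def extremal (φ : ℕ → ℝ) (n : ℕ) : ℝ≥0∞ :=
  ENNReal.ofReal (φ n)⁻¹

lemma hardyAvg_mono {f g : ℕ → ℝ≥0∞} (h : f ≤ g) : hardyAvg f ≤ hardyAvg g := fun n => by
  unfold hardyAvg
  gcongr with k
  exact h k

lemma hardyAvg_const_mul (c : ℝ≥0∞) (f : ℕ → ℝ≥0∞) (n : ℕ) :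
    hardyAvg (fun k => c * f k) n = c * hardyAvg f n := by
  simp only [hardyAvg, ← Finset.mul_sum, mul_div_assoc]

variable {φ : ℕ → ℝ}

lemma ofReal_mul_extremal (hφ : ∀ n, 0 < φ n) (n : ℕ) :
    ENNReal.ofReal (φ n) * extremal φ n = 1 := by
  rw [extremal, ← ENNReal.ofReal_mul (hφ n).le, mul_inv_cancel₀ (hφ n).ne', ENNReal.ofReal_one]

lemma weakNorm_extremal (hφ : ∀ n, 0 < φ n) : weakNorm φ (extremal φ) = 1 := by
  simp only [weakNorm, ofReal_mul_extremal hφ, iSup_const]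

lemma extremal_antitone (hφ : ∀ n, 0 < φ n) (hmono : Monotone φ) : Antitone (extremal φ) :=
  fun _ _ hab => ENNReal.ofReal_le_ofReal (inv_anti₀ (hφ _) (hmono hab))

lemma le_weakNorm_mul_extremal (hφ : ∀ n, 0 < φ n) (f : ℕ → ℝ≥0∞) (k : ℕ) :
    f k ≤ weakNorm φ f * extremal φ k :=
  calc f k = ENNReal.ofReal (φ k) * f k * extremal φ k := by
        rw [mul_right_comm, ofReal_mul_extremal hφ, one_mul]
    _ ≤ weakNorm φ f * extremal φ k := by
        gcongr
        exact le_iSup (fun n => ENNReal.ofReal (φ n) * f n) k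

lemma weakNorm_hardyAvg_le (hφ : ∀ n, 0 < φ n) (f : ℕ → ℝ≥0∞) :
    weakNorm φ (hardyAvg f) ≤ weakNorm φ f * weakNorm φ (hardyAvg (extremal φ)) := by
  refine iSup_le fun n => ?_
  calc ENNReal.ofReal (φ n) * hardyAvg f n
      ≤ ENNReal.ofReal (φ n) * (weakNorm φ f * hardyAvg (extremal φ) n) := by
        rw [← hardyAvg_const_mul (weakNorm φ f)]
        exact mul_le_mul_right (hardyAvg_mono (le_weakNorm_mul_extremal hφ f) n) _
    _ = weakNorm φ f * (ENNReal.ofReal (φ n) * hardyAvg (extremal φ) n) := by ring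
    _ ≤ weakNorm φ f * weakNorm φ (hardyAvg (extremal φ)) := by
        gcongr
        exact le_iSup (fun n => ENNReal.ofReal (φ n) * hardyAvg (extremal φ) n) n

theorem hardy_bounded_iff (hφ : ∀ n, 0 < φ n) (hmono : Monotone φ) :
    (∃ C : ℝ≥0, ∀ f : ℕ → ℝ≥0∞, Antitone f →
        weakNorm φ (hardyAvg f) ≤ C * weakNorm φ f) ↔
      weakNorm φ (hardyAvg (extremal φ)) ≠ ⊤ := by
  constructor
  · rintro ⟨C, hC⟩
    have := hC _ (extremal_antitone hφ hmono)
    rw [weakNorm_extremal hφ, mul_one] at this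
    exact ne_top_of_le_ne_top ENNReal.coe_ne_top this
  · intro h
    refine ⟨(weakNorm φ (hardyAvg (extremal φ))).toNNReal, fun f _ => ?_⟩
    rw [ENNReal.coe_toNNReal h, mul_comm]
    exact weakNorm_hardyAvg_le hφ f

lemma ofReal_mul_hardyAvg_extremal (hφ : ∀ n, 0 < φ n) (n : ℕ) :
    ENNReal.ofReal (φ n) * hardyAvg (extremal φ) n =
      ENNReal.ofReal (φ n * (∑ k ∈ Finset.range (n + 1), (φ k)⁻¹) / (n + 1)) := by
  have hsum : ∑ k ∈ Finset.range (n + 1), extremal φ k =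
      ENNReal.ofReal (∑ k ∈ Finset.range (n + 1), (φ k)⁻¹) :=
    (ENNReal.ofReal_sum_of_nonneg fun k _ => (inv_pos.2 (hφ k)).le).symm
  have hlen : (n : ℝ≥0∞) + 1 = ENNReal.ofReal (n + 1) := by
    rw [ENNReal.ofReal_add n.cast_nonneg zero_le_one, ENNReal.ofReal_natCast, ENNReal.ofReal_one]
  rw [hardyAvg, hsum, hlen, ← ENNReal.ofReal_div_of_pos (by positivity),
    ← ENNReal.ofReal_mul (hφ n).le, mul_div_assoc]

lemma weakNorm_hardyAvg_extremal_ne_top_iff (hφ : ∀ n, 0 < φ n) :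
    weakNorm φ (hardyAvg (extremal φ)) ≠ ⊤ ↔
      ∃ C : ℝ, 0 < C ∧ ∀ n : ℕ,
        ∑ k ∈ Finset.range (n + 1), (φ k)⁻¹ ≤ C * ((n : ℝ) + 1) * (φ n)⁻¹ := by
  have hterm : ∀ (C : ℝ) (n : ℕ), φ n * (∑ k ∈ Finset.range (n + 1), (φ k)⁻¹) / (n + 1) ≤ C ↔
      ∑ k ∈ Finset.range (n + 1), (φ k)⁻¹ ≤ C * ((n : ℝ) + 1) * (φ n)⁻¹ := fun C n => by
    rw [div_le_iff₀ (by positivity), ← div_eq_mul_inv, le_div_iff₀ (hφ n), mul_comm]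
  simp only [weakNorm, ofReal_mul_hardyAvg_extremal hφ, ← hterm]
  constructor
  · intro h
    refine ⟨(⨆ n, ENNReal.ofReal (φ n * (∑ k ∈ Finset.range (n + 1), (φ k)⁻¹) / (n + 1))).toReal
      + 1, by positivity, fun n => ?_⟩
    refine le_add_of_le_of_nonneg ?_ zero_le_one
    exact (ENNReal.ofReal_le_iff_le_toReal h).1 (le_iSup
      (fun n => ENNReal.ofReal (φ n * (∑ k ∈ Finset.range (n + 1), (φ k)⁻¹) / (n + 1))) n)
  · rintro ⟨C, -, hC⟩
    exact ne_top_of_le_ne_top ENNReal.ofReal_ne_top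
      (iSup_le fun n => ENNReal.ofReal_le_ofReal (hC n))

end DiscreteHardy

/-- For a sequence of positive weights `w` with partial sums `W(n)`, the discrete Hardy
operator `A_d f(n) = (1/(n+1)) Σ_{k≤n} f(k)` is bounded from `ℓ^{p,∞}_dec(w)` to
`ℓ^{p,∞}(w)` iff `Σ_{k≤n} W(k)^{-1/p} ≤ C (n+1) W(n)^{-1/p}` for all `n`.
(For nonincreasing nonnegative sequences `g`, `‖g‖_{ℓ^{p,∞}(w)} = sup_n W(n)^{1/p} g(n)`.) -/
theorem stmt7 (p : ℝ) (hp : 0 < p) (w : ℕ → ℝ) (hw : ∀ n, 0 < w n) :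
    (∃ C : ℝ≥0, ∀ f : ℕ → ℝ≥0∞, Antitone f →
        (⨆ n : ℕ, ENNReal.ofReal ((∑ k ∈ Finset.range (n + 1), w k) ^ (1 / p)) *
            ((∑ k ∈ Finset.range (n + 1), f k) / ((n : ℝ≥0∞) + 1))) ≤
          C * ⨆ n : ℕ, ENNReal.ofReal ((∑ k ∈ Finset.range (n + 1), w k) ^ (1 / p)) * f n) ↔
    ∃ C : ℝ, 0 < C ∧ ∀ n : ℕ,
      (∑ k ∈ Finset.range (n + 1), (∑ j ∈ Finset.range (k + 1), w j) ^ (-(1 / p))) ≤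
        C * ((n : ℝ) + 1) * (∑ k ∈ Finset.range (n + 1), w k) ^ (-(1 / p)) := by
  set W : ℕ → ℝ := fun n => ∑ k ∈ Finset.range (n + 1), w k
  have hW : ∀ n, 0 < W n := fun n => Finset.sum_pos (fun k _ => hw k) Finset.nonempty_range_add_one
  have hWmono : Monotone W := fun a b hab => Finset.sum_le_sum_of_subset_of_nonneg
    (Finset.range_subset_range.2 (by omega)) fun k _ _ => (hw k).le
  have hφ : ∀ n, 0 < W n ^ (1 / p) := fun n => Real.rpow_pos_of_pos (hW n) _
  have hφmono : Monotone fun n => W n ^ (1 / p) := fun a b hab =>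
    Real.rpow_le_rpow (hW a).le (hWmono hab) (by positivity)
  have key := (DiscreteHardy.hardy_bounded_iff hφ hφmono).trans
    (DiscreteHardy.weakNorm_hardyAvg_extremal_ne_top_iff hφ)
  simp only [← Real.rpow_neg (hW _).le] at key
  exact key
end

section
/- Let w = (w(n))_n and v = (v(n))_n be sequences of positive numbers and 0 < p ≤ 1. Then sup over positive nonincreasing sequences f of (Σ_{n=0}^∞ f(n) v(n)) / (Σ_{n=0}^∞ f(n)^p w(n))^{1/p} equals sup_{n ≥ 0} V(n) / W(n)^{1/p}, where V(n) = Σ_{k=0}^n v(k) and W(n) = Σ_{k=0}^n w(k). -/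
open MeasureTheory Set
open scoped ENNReal NNReal

section SawyerAux

open Finset


lemma key_concave {p : ℝ} (hp0 : 0 < p) (hp1 : p ≤ 1) {c x d : ℝ}
    (hc : 0 ≤ c) (hcx : c ≤ x) (hd : 0 ≤ d) :
    (x + d) ^ p - x ^ p ≤ (c + d) ^ p - c ^ p := by
  rcases eq_or_lt_of_le hcx with rfl | hcx
  · exact le_refl _
  rcases eq_or_lt_of_le hd with rfl | hd
  · simp
  have hx : (0:ℝ) ≤ x := hc.trans hcx.le
  have hg : ConvexOn ℝ (Ici (0:ℝ)) (fun t : ℝ => -(t ^ p)) :=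
    (Real.concaveOn_rpow hp0.le hp1).neg
  set g : ℝ → ℝ := fun t : ℝ => -(t ^ p) with hgdef
  have m1 : c ∈ Ici (0:ℝ) := hc
  have m2 : c + d ∈ Ici (0:ℝ) := by simp [Set.mem_Ici]; linarith
  have m3 : x ∈ Ici (0:ℝ) := hx
  have m4 : x + d ∈ Ici (0:ℝ) := by simp [Set.mem_Ici]; linarith
  have h1 : (g (c+d) - g c)/((c+d) - c) ≤ (g (x+d) - g c)/((x+d) - c) :=
    hg.secant_mono m1 m2 m4 (by intro h; nlinarith) (by intro h; nlinarith) (by linarith)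
  have h2 : (g c - g (x+d))/(c - (x+d)) ≤ (g x - g (x+d))/(x - (x+d)) :=
    hg.secant_mono m4 m1 m3 (by intro h; nlinarith) (by intro h; nlinarith) hcx.le
  have e1 : (g (x+d) - g c)/((x+d) - c) = (g c - g (x+d))/(c - (x+d)) := by
    rw [← neg_div_neg_eq]; ring_nf
  have e2 : (g x - g (x+d))/(x - (x+d)) = (g (x+d) - g x)/d := by
    rw [← neg_div_neg_eq]; ring_nf
  have h3 : (g (c+d) - g c)/d ≤ (g (x+d) - g x)/d := by
    have := (h1.trans_eq e1).trans (h2.trans_eq e2)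
    simpa using this
  have h4 : g (c+d) - g c ≤ g (x+d) - g x := by
    exact (div_le_div_iff_of_pos_right hd).mp h3
  simp only [hgdef] at h4
  linarith

lemma sawyer_L1 {p : ℝ} (hp0 : 0 < p) (hp1 : p ≤ 1) (a v : ℕ → ℝ)
    (ha : Antitone a) (ha0 : ∀ n, 0 ≤ a n) (hv : ∀ n, 0 ≤ v n) (K : ℕ) :
    (∑ n ∈ Finset.range K, a n * v n) ^ p ≤
      ∑ n ∈ Finset.range K, a n ^ p *
        ((∑ k ∈ Finset.range (n+1), v k) ^ p - (∑ k ∈ Finset.range n, v k) ^ p) := by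
  induction K with
  | zero => simp [Real.zero_rpow hp0.ne']
  | succ K IH =>
    rw [Finset.sum_range_succ, Finset.sum_range_succ (f := fun n => a n ^ p * _)]
    set A := ∑ n ∈ Finset.range K, a n * v n with hA
    have hA0 : 0 ≤ A := Finset.sum_nonneg fun n _ => mul_nonneg (ha0 n) (hv n)
    set S := fun n => ∑ k ∈ Finset.range n, v k with hS
    have hS0 : ∀ n, 0 ≤ S n := fun n => Finset.sum_nonneg fun k _ => hv k
    have hAc : a K * S K ≤ A := by
      calc a K * S K = ∑ n ∈ Finset.range K, a K * v n := by rw [Finset.mul_sum]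
      _ ≤ A := Finset.sum_le_sum fun n hn =>
          mul_le_mul_of_nonneg_right (ha (Finset.mem_range.mp hn).le) (hv n)
    have hkey : (A + a K * v K) ^ p - A ^ p ≤
        (a K * S K + a K * v K) ^ p - (a K * S K) ^ p :=
      key_concave hp0 hp1 (mul_nonneg (ha0 K) (hS0 K)) hAc
        (mul_nonneg (ha0 K) (hv K))
    have e1 : a K * S K + a K * v K = a K * S (K+1) := by
      rw [hS]; simp [Finset.sum_range_succ, mul_add]
    have e2 : (a K * S (K+1)) ^ p = a K ^ p * S (K+1) ^ p :=
      Real.mul_rpow (ha0 K) (hS0 (K+1))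
    have e3 : (a K * S K) ^ p = a K ^ p * S K ^ p :=
      Real.mul_rpow (ha0 K) (hS0 K)
    rw [e1, e2, e3] at hkey
    have : a K ^ p * (S (K+1) ^ p - S K ^ p)
        = a K ^ p * S (K+1) ^ p - a K ^ p * S K ^ p := by ring
    linarith [IH]

lemma sawyer_abel {a A B : ℕ → ℝ} (ha : Antitone a) (ha0 : ∀ n, 0 ≤ a n)
    (hAB : ∀ n, A n ≤ B n) (h0 : B 0 ≤ A 0) (K : ℕ) :
    ∑ n ∈ Finset.range K, a n * (A (n+1) - A n) + a K * (B K - A K) ≤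
      ∑ n ∈ Finset.range K, a n * (B (n+1) - B n) := by
  induction K with
  | zero => simpa using mul_nonpos_of_nonneg_of_nonpos (ha0 0) (by linarith [h0])
  | succ K IH =>
    rw [Finset.sum_range_succ, Finset.sum_range_succ (f := fun n => a n * (B (n+1) - B n))]
    have h5 : a (K+1) ≤ a K := ha (Nat.le_succ K)
    have h6 : A (K+1) ≤ B (K+1) := hAB (K+1)
    nlinarith [mul_le_mul_of_nonneg_left h6 (sub_nonneg.mpr h5)]

lemma sawyer_abel' {a A B : ℕ → ℝ} (ha : Antitone a) (ha0 : ∀ n, 0 ≤ a n)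
    (hAB : ∀ n, A n ≤ B n) (h0 : B 0 ≤ A 0) (K : ℕ) :
    ∑ n ∈ Finset.range K, a n * (A (n+1) - A n) ≤
      ∑ n ∈ Finset.range K, a n * (B (n+1) - B n) := by
  have := sawyer_abel ha ha0 hAB h0 K
  nlinarith [mul_nonneg (ha0 K) (sub_nonneg.mpr (hAB K))]

lemma sawyer_real {p : ℝ} (hp0 : 0 < p) (hp1 : p ≤ 1) (a v w : ℕ → ℝ)
    (ha : Antitone a) (ha0 : ∀ n, 0 ≤ a n) (hv : ∀ n, 0 ≤ v n) (hw : ∀ n, 0 ≤ w n)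
    (M : ℝ) (hM : 0 ≤ M)
    (hVW : ∀ n, (∑ k ∈ Finset.range (n+1), v k) ≤ M * (∑ k ∈ Finset.range (n+1), w k) ^ (1/p))
    (K : ℕ) :
    ∑ n ∈ Finset.range K, a n * v n ≤ M * (∑ n ∈ Finset.range K, a n ^ p * w n) ^ (1/p) := by
  have hpinv : p * (1/p) = 1 := by field_simp
  set A : ℕ → ℝ := fun n => (∑ k ∈ Finset.range n, v k) ^ p with hAdef
  set B : ℕ → ℝ := fun n => M ^ p * ∑ k ∈ Finset.range n, w k with hBdef
  have hS0 : ∀ n, (0:ℝ) ≤ ∑ k ∈ Finset.range n, w k := fun n => Finset.sum_nonneg fun k _ => hw k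
  have hAB : ∀ n, A n ≤ B n := by
    intro n
    cases n with
    | zero => simp [hAdef, hBdef, Real.zero_rpow hp0.ne']
    | succ m =>
      have h1 : (∑ k ∈ Finset.range (m+1), v k) ^ p ≤
          (M * (∑ k ∈ Finset.range (m+1), w k) ^ (1/p)) ^ p :=
        Real.rpow_le_rpow (Finset.sum_nonneg fun k _ => hv k) (hVW m) hp0.le
      have h2 : (M * (∑ k ∈ Finset.range (m+1), w k) ^ (1/p)) ^ p
          = M ^ p * ∑ k ∈ Finset.range (m+1), w k := by
        rw [Real.mul_rpow hM (Real.rpow_nonneg (hS0 _) _), ← Real.rpow_mul (hS0 _),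
          one_div, inv_mul_cancel₀ hp0.ne', Real.rpow_one]
      rw [hAdef, hBdef]
      exact h1.trans_eq h2
  have h0 : B 0 ≤ A 0 := by simp [hAdef, hBdef, Real.zero_rpow hp0.ne']
  have ha' : Antitone (fun n => a n ^ p) := fun m n h =>
    Real.rpow_le_rpow (ha0 n) (ha h) hp0.le
  have ha0' : ∀ n, 0 ≤ a n ^ p := fun n => Real.rpow_nonneg (ha0 n) p
  have habel := sawyer_abel' ha' ha0' hAB h0 K
  have hL1 := sawyer_L1 hp0 hp1 a v ha ha0 hv K
  have hBd : ∀ n, B (n+1) - B n = M ^ p * w n := by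
    intro n; rw [hBdef]; simp [Finset.sum_range_succ, mul_add]
  have hcomb : (∑ n ∈ Finset.range K, a n * v n) ^ p ≤
      M ^ p * ∑ n ∈ Finset.range K, a n ^ p * w n := by
    calc (∑ n ∈ Finset.range K, a n * v n) ^ p
        ≤ ∑ n ∈ Finset.range K, a n ^ p * (A (n+1) - A n) := hL1
      _ ≤ ∑ n ∈ Finset.range K, a n ^ p * (B (n+1) - B n) := habel
      _ = M ^ p * ∑ n ∈ Finset.range K, a n ^ p * w n := by
          rw [Finset.mul_sum]
          exact Finset.sum_congr rfl fun n _ => by rw [hBd n]; ring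
  have hL0 : 0 ≤ ∑ n ∈ Finset.range K, a n * v n :=
    Finset.sum_nonneg fun n _ => mul_nonneg (ha0 n) (hv n)
  have hsum0 : 0 ≤ ∑ n ∈ Finset.range K, a n ^ p * w n :=
    Finset.sum_nonneg fun n _ => mul_nonneg (ha0' n) (hw n)
  calc ∑ n ∈ Finset.range K, a n * v n
      = ((∑ n ∈ Finset.range K, a n * v n) ^ p) ^ (1/p) := by
        rw [← Real.rpow_mul hL0, hpinv, Real.rpow_one]
    _ ≤ (M ^ p * ∑ n ∈ Finset.range K, a n ^ p * w n) ^ (1/p) :=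
        Real.rpow_le_rpow (Real.rpow_nonneg hL0 p) hcomb (by positivity)
    _ = M * (∑ n ∈ Finset.range K, a n ^ p * w n) ^ (1/p) := by
        rw [Real.mul_rpow (Real.rpow_nonneg hM p) hsum0, ← Real.rpow_mul hM, hpinv,
          Real.rpow_one]

end SawyerAux

/-- Discrete Sawyer-type duality for `0 < p ≤ 1`: the supremum over positive nonincreasing
sequences `f` (not identically zero, with finite denominator) of
`(Σ f(n) v(n)) / (Σ f(n)^p w(n))^{1/p}` equals `sup_n V(n)/W(n)^{1/p}`. -/
theorem stmt8 (p : ℝ) (hp0 : 0 < p) (hp1 : p ≤ 1) (v w : ℕ → ℝ)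
    (hv : ∀ n, 0 < v n) (hw : ∀ n, 0 < w n) :
    (⨆ f ∈ {f : ℕ → ℝ≥0∞ | Antitone f ∧ f ≠ 0 ∧
        (∑' n, f n ^ p * ENNReal.ofReal (w n)) ≠ ⊤},
      (∑' n, f n * ENNReal.ofReal (v n)) /
        (∑' n, f n ^ p * ENNReal.ofReal (w n)) ^ (1 / p)) =
    ⨆ n : ℕ, ENNReal.ofReal (∑ k ∈ Finset.range (n + 1), v k) /
      ENNReal.ofReal ((∑ k ∈ Finset.range (n + 1), w k) ^ (1 / p)) := by
  have hp0' : (0:ℝ) < 1 / p := by positivity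
  have hVr0 : ∀ n : ℕ, (0:ℝ) ≤ ∑ k ∈ Finset.range (n+1), v k :=
    fun n => Finset.sum_nonneg fun k _ => (hv k).le
  have hWr0 : ∀ n : ℕ, (0:ℝ) < ∑ k ∈ Finset.range (n+1), w k :=
    fun n => Finset.sum_pos (fun k _ => hw k) ⟨0, by simp⟩
  apply le_antisymm
  · -- LHS ≤ RHS
    refine iSup₂_le fun f hf => ?_
    obtain ⟨hfa, hfne, hfd⟩ := hf
    set M := ⨆ n : ℕ, ENNReal.ofReal (∑ k ∈ Finset.range (n + 1), v k) /
      ENNReal.ofReal ((∑ k ∈ Finset.range (n + 1), w k) ^ (1 / p)) with hMdef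
    by_cases hMtop : M = ⊤
    · rw [hMtop]; exact le_top
    set D := ∑' n, f n ^ p * ENNReal.ofReal (w n) with hDdef
    have hfin : ∀ n, f n ≠ ⊤ := by
      intro n hn
      apply hfd
      have h1 := ENNReal.le_tsum (f := fun n => f n ^ p * ENNReal.ofReal (w n)) n
      rw [hn, ENNReal.top_rpow_of_pos hp0, ENNReal.top_mul
        (by simpa [ENNReal.ofReal_eq_zero] using (hw n).not_ge)] at h1
      exact top_le_iff.mp h1
    set a : ℕ → ℝ := fun n => (f n).toReal with hadef
    have hfa' : ∀ n, f n = ENNReal.ofReal (a n) := fun n =>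
      (ENNReal.ofReal_toReal (hfin n)).symm
    have ha0 : ∀ n, 0 ≤ a n := fun n => ENNReal.toReal_nonneg
    have ha : Antitone a := fun m n h => ENNReal.toReal_mono (hfin m) (hfa h)
    have hD0 : D ≠ 0 := by
      obtain ⟨n, hn⟩ : ∃ n, f n ≠ 0 := by
        by_contra h
        push_neg at h
        exact hfne (funext fun n => h n)
      have hpos : f n ^ p * ENNReal.ofReal (w n) ≠ 0 :=
        mul_ne_zero (by simp [ENNReal.rpow_eq_zero_iff, hn, hfin n, hp0.not_gt])
          (by simpa [ENNReal.ofReal_eq_zero] using (hw n).not_ge)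
      intro h
      have hle := ENNReal.le_tsum (f := fun n => f n ^ p * ENNReal.ofReal (w n)) n
      rw [← hDdef, h] at hle
      exact hpos (le_zero_iff.mp hle)
    have hDp0 : D ^ (1/p) ≠ 0 := by
      simp [ENNReal.rpow_eq_zero_iff, hD0, hp0', hp0'.not_gt, hfd]
    have hDpt : D ^ (1/p) ≠ ⊤ := ENNReal.rpow_ne_top_of_nonneg hp0'.le hfd
    rw [ENNReal.div_le_iff hDp0 hDpt]
    rw [ENNReal.tsum_eq_iSup_nat]
    refine iSup_le fun K => ?_
    -- real-side bound hypothesis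
    set M' := M.toReal with hM'def
    have hM'0 : 0 ≤ M' := ENNReal.toReal_nonneg
    have hVW : ∀ n, (∑ k ∈ Finset.range (n+1), v k) ≤
        M' * (∑ k ∈ Finset.range (n+1), w k) ^ (1/p) := by
      intro n
      have hterm : ENNReal.ofReal (∑ k ∈ Finset.range (n + 1), v k) /
          ENNReal.ofReal ((∑ k ∈ Finset.range (n + 1), w k) ^ (1 / p)) ≤ M :=
        le_iSup (fun n : ℕ => ENNReal.ofReal (∑ k ∈ Finset.range (n + 1), v k) /
          ENNReal.ofReal ((∑ k ∈ Finset.range (n + 1), w k) ^ (1 / p))) n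
      have hden0 : ENNReal.ofReal ((∑ k ∈ Finset.range (n + 1), w k) ^ (1 / p)) ≠ 0 := by
        simp only [ne_eq, ENNReal.ofReal_eq_zero, not_le]
        exact Real.rpow_pos_of_pos (hWr0 n) (1/p)
      rw [ENNReal.div_le_iff hden0 ENNReal.ofReal_ne_top] at hterm
      have := ENNReal.toReal_mono
        (ENNReal.mul_ne_top hMtop ENNReal.ofReal_ne_top) hterm
      rwa [ENNReal.toReal_ofReal (hVr0 n), ENNReal.toReal_mul,
        ENNReal.toReal_ofReal (Real.rpow_pos_of_pos (hWr0 n) (1/p)).le] at this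
    have hreal := sawyer_real hp0 hp1 a v w ha ha0 (fun n => (hv n).le)
      (fun n => (hw n).le) M' hM'0 hVW K
    have hnum : ∑ n ∈ Finset.range K, f n * ENNReal.ofReal (v n) =
        ENNReal.ofReal (∑ n ∈ Finset.range K, a n * v n) := by
      rw [ENNReal.ofReal_sum_of_nonneg fun n _ => mul_nonneg (ha0 n) (hv n).le]
      exact Finset.sum_congr rfl fun n _ => by
        rw [hfa' n, ENNReal.ofReal_mul (ha0 n)]
    have hden : ∑ n ∈ Finset.range K, f n ^ p * ENNReal.ofReal (w n) =
        ENNReal.ofReal (∑ n ∈ Finset.range K, a n ^ p * w n) := by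
      rw [ENNReal.ofReal_sum_of_nonneg fun n _ =>
        mul_nonneg (Real.rpow_nonneg (ha0 n) p) (hw n).le]
      exact Finset.sum_congr rfl fun n _ => by
        rw [hfa' n, ENNReal.ofReal_rpow_of_nonneg (ha0 n) hp0.le,
          ENNReal.ofReal_mul (Real.rpow_nonneg (ha0 n) p)]
    calc ∑ n ∈ Finset.range K, f n * ENNReal.ofReal (v n)
        = ENNReal.ofReal (∑ n ∈ Finset.range K, a n * v n) := hnum
      _ ≤ ENNReal.ofReal (M' * (∑ n ∈ Finset.range K, a n ^ p * w n) ^ (1/p)) :=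
          ENNReal.ofReal_le_ofReal hreal
      _ = M * ENNReal.ofReal ((∑ n ∈ Finset.range K, a n ^ p * w n) ^ (1/p)) := by
          rw [ENNReal.ofReal_mul hM'0, hM'def, ENNReal.ofReal_toReal hMtop]
      _ = M * (∑ n ∈ Finset.range K, f n ^ p * ENNReal.ofReal (w n)) ^ (1/p) := by
          rw [hden, ENNReal.ofReal_rpow_of_nonneg
            (Finset.sum_nonneg fun n _ => mul_nonneg (Real.rpow_nonneg (ha0 n) p) (hw n).le)
            hp0'.le]
      _ ≤ M * D ^ (1/p) := by
          gcongr
          exact ENNReal.sum_le_tsum _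
  · -- RHS ≤ LHS
    refine iSup_le fun n => ?_
    set f : ℕ → ℝ≥0∞ := fun k => if k ≤ n then 1 else 0 with hfdef
    have hterm_num : ∀ k, f k * ENNReal.ofReal (v k) =
        if k ≤ n then ENNReal.ofReal (v k) else 0 := by
      intro k; by_cases h : k ≤ n <;> simp [hfdef, h]
    have hterm_den : ∀ k, f k ^ p * ENNReal.ofReal (w k) =
        if k ≤ n then ENNReal.ofReal (w k) else 0 := by
      intro k; by_cases h : k ≤ n <;>
        simp [hfdef, h, ENNReal.zero_rpow_of_pos hp0]
    have hsum : ∀ g : ℕ → ℝ, (∀ k, 0 ≤ g k) →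
        (∑' k, if k ≤ n then ENNReal.ofReal (g k) else 0) =
        ENNReal.ofReal (∑ k ∈ Finset.range (n+1), g k) := by
      intro g hg
      rw [tsum_eq_sum (s := Finset.range (n+1))
        (fun k hk => if_neg (by simpa [Finset.mem_range, Nat.lt_succ_iff] using hk)),
        ENNReal.ofReal_sum_of_nonneg fun k _ => hg k]
      exact Finset.sum_congr rfl fun k hk =>
        if_pos (Nat.lt_succ_iff.mp (Finset.mem_range.mp hk))
    have hnum : (∑' k, f k * ENNReal.ofReal (v k)) =
        ENNReal.ofReal (∑ k ∈ Finset.range (n+1), v k) := by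
      rw [tsum_congr hterm_num, hsum v fun k => (hv k).le]
    have hden : (∑' k, f k ^ p * ENNReal.ofReal (w k)) =
        ENNReal.ofReal (∑ k ∈ Finset.range (n+1), w k) := by
      rw [tsum_congr hterm_den, hsum w fun k => (hw k).le]
    have hfa : Antitone f := by
      intro i j hij
      by_cases h1 : j ≤ n
      · simp [hfdef, h1, hij.trans h1]
      · simp [hfdef, h1]
    have hfne : f ≠ 0 := by
      intro h
      have := congrFun h 0
      simp [hfdef] at this
    refine le_iSup₂_of_le f ⟨hfa, hfne, by rw [hden]; exact ENNReal.ofReal_ne_top⟩ ?_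
    rw [hnum, hden, ENNReal.ofReal_rpow_of_nonneg (hWr0 n).le hp0'.le]
end

section
/- Let (X,μ) be a σ-finite measure space, w a weight on (0,∞), 0 < p < ∞ and 0 < q ≤ ∞. The functional ‖f‖_{Λ^{p,q}_X(w)} is a quasi-norm on the space Λ^{p,q}_X(w) (i.e., ‖f‖=0 ⟹ f=0 a.e., homogeneity, and ‖f+g‖ ≤ C(‖f‖+‖g‖)) if and only if 0 < W(μ(A∪B)) ≤ C'(W(μ(A)) + W(μ(B))) for all measurable sets A, B ⊂ X with μ(A∪B) > 0. -/
open MeasureTheory Set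
open scoped ENNReal

/-- The distribution function of `f` with respect to `μ`. -/
noncomputable def distf {α : Type*} [MeasurableSpace α] (μ : Measure α)
    (f : α → ℝ) (t : ℝ) : ℝ≥0∞ := μ {x | t < |f x|}

/-- The nonincreasing rearrangement of `f` with respect to `μ`. -/
noncomputable def rearr {α : Type*} [MeasurableSpace α] (μ : Measure α)
    (f : α → ℝ) (t : ℝ) : ℝ≥0∞ :=
  sInf {s : ℝ≥0∞ | μ {x | s < ENNReal.ofReal |f x|} ≤ ENNReal.ofReal t}

/-- The nonincreasing rearrangement of an `ℝ≥0∞`-valued function with respect to `μ`. -/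
noncomputable def rearrE {α : Type*} [MeasurableSpace α] (μ : Measure α)
    (g : α → ℝ≥0∞) (t : ℝ) : ℝ≥0∞ :=
  sInf {s : ℝ≥0∞ | μ {x | s < g x} ≤ ENNReal.ofReal t}

/-- `W(r) = ∫₀^r w`, for `r ∈ [0,∞]`. -/
noncomputable def Wfun (w : ℝ → ℝ≥0∞) (r : ℝ≥0∞) : ℝ≥0∞ :=
  ∫⁻ t in {t : ℝ | 0 < t ∧ ENNReal.ofReal t < r}, w t
open scoped NNReal

/-- The Lorentz functional `‖f‖_{Λ^{p,q}_X(w)} = ‖f*‖_{L^{p,q}(w(t)dt)}`. -/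
noncomputable def lamNorm {α : Type*} [MeasurableSpace α] (μ : Measure α)
    (w : ℝ → ℝ≥0∞) (p : ℝ) (q : ℝ≥0∞) (f : α → ℝ) : ℝ≥0∞ :=
  if q = ⊤ then
    ⨆ t ∈ Set.Ioi (0:ℝ),
      ENNReal.ofReal (t ^ (1 / p)) *
        rearrE ((volume.restrict (Set.Ioi (0:ℝ))).withDensity w) (rearr μ f) t
  else
    (∫⁻ t in Set.Ioi (0:ℝ),
      (rearrE ((volume.restrict (Set.Ioi (0:ℝ))).withDensity w) (rearr μ f) t) ^ q.toReal *
        ENNReal.ofReal (t ^ (q.toReal / p - 1))) ^ (1 / q.toReal)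

section core
variable {α : Type*} [MeasurableSpace α] (ν : Measure α) (g : α → ℝ≥0∞)

lemma dist_antitone : Antitone (fun s : ℝ≥0∞ => ν {x | s < g x}) := by
  intro s s' h
  exact measure_mono (fun x hx => lt_of_le_of_lt h hx)

lemma dist_rightCont (s : ℝ≥0∞) (hs : s ≠ ⊤) :
    ν {x | s < g x} = ⨆ n : ℕ, ν {x | s + (n : ℝ≥0∞)⁻¹ < g x} := by
  have hU : {x | s < g x} = ⋃ n : ℕ, {x | s + (n : ℝ≥0∞)⁻¹ < g x} := by
    ext x
    simp only [mem_setOf_eq, mem_iUnion]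
    constructor
    · intro hx
      obtain ⟨r, hr1, hr2⟩ := exists_between hx
      have hpos : (0:ℝ≥0∞) < r - s := tsub_pos_of_lt hr1
      obtain ⟨n, hn⟩ := ENNReal.exists_inv_nat_lt hpos.ne'
      refine ⟨n, ?_⟩
      calc s + (n : ℝ≥0∞)⁻¹ < s + (r - s) := ENNReal.add_lt_add_left hs hn
      _ = r := add_tsub_cancel_of_le hr1.le
      _ < g x := hr2
    · rintro ⟨n, hn⟩
      exact lt_of_le_of_lt le_self_add hn
  rw [hU]
  refine Directed.measure_iUnion ?_
  intro m n
  refine ⟨max m n, fun x hx => lt_of_le_of_lt (add_le_add_right (ENNReal.inv_le_inv.2 (by exact_mod_cast Nat.cast_le.2 (le_max_left m n))) s) hx,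
    fun x hx => lt_of_le_of_lt (add_le_add_right (ENNReal.inv_le_inv.2 (by exact_mod_cast Nat.cast_le.2 (le_max_right m n))) s) hx⟩

/-- Key characterization of the rearrangement. -/
lemma lt_rearrE_iff (t : ℝ) (s : ℝ≥0∞) :
    s < rearrE ν g t ↔ ENNReal.ofReal t < ν {x | s < g x} := by
  constructor
  · intro h
    by_contra h'
    push_neg at h'
    have hmem : s ∈ {s' : ℝ≥0∞ | ν {x | s' < g x} ≤ ENNReal.ofReal t} := h'
    exact absurd (sInf_le hmem) (not_le.2 h)
  · intro h
    by_cases hs : s = ⊤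
    · subst hs
      have : {x | (⊤:ℝ≥0∞) < g x} = ∅ := eq_empty_iff_forall_notMem.2 fun x (hx : ⊤ < g x) => not_top_lt hx
      rw [this] at h
      simp at h
    rcases lt_or_ge s (rearrE ν g t) with h' | h'
    · exact h'
    exfalso
    -- rearrE ≤ s; derive contradiction with right continuity
    have key : ∀ n : ℕ, ν {x | s + (n:ℝ≥0∞)⁻¹ < g x} ≤ ENNReal.ofReal t := by
      intro n
      have hlt : rearrE ν g t < s + (n:ℝ≥0∞)⁻¹ :=
        lt_of_le_of_lt h' (ENNReal.lt_add_right hs (by simp))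
      rw [rearrE, sInf_lt_iff] at hlt
      obtain ⟨s', hs'1, hs'2⟩ := hlt
      exact le_trans (dist_antitone ν g hs'2.le) hs'1
    rw [dist_rightCont ν g s hs] at h
    exact absurd (iSup_le key) (not_le.2 h)

lemma rearrE_antitone : Antitone (rearrE ν g) := by
  intro t t' h
  refine le_sInf fun s hs => sInf_le ?_
  exact le_trans hs (ENNReal.ofReal_le_ofReal h)

end core

lemma rearr_eq_rearrE {α : Type*} [MeasurableSpace α] (μ : Measure α) (f : α → ℝ) :
    rearr μ f = rearrE μ (fun x => ENNReal.ofReal |f x|) := rfl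

lemma Wfun_mono (w : ℝ → ℝ≥0∞) : Monotone (Wfun w) := by
  intro r r' h
  exact lintegral_mono_set (fun t ht => ⟨ht.1, lt_of_lt_of_le ht.2 h⟩)

lemma Wfun_zero (w : ℝ → ℝ≥0∞) : Wfun w 0 = 0 := by
  have : {t : ℝ | 0 < t ∧ ENNReal.ofReal t < 0} = ∅ :=
    eq_empty_iff_forall_notMem.2 fun t ht => (not_lt.2 (zero_le)) ht.2
  rw [Wfun, this]
  simp

lemma withDensity_lt_set (w : ℝ → ℝ≥0∞) (c : ℝ≥0∞) :
    ((volume.restrict (Set.Ioi (0:ℝ))).withDensity w) {t : ℝ | ENNReal.ofReal t < c}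
      = Wfun w c := by
  have hmeas : MeasurableSet {t : ℝ | ENNReal.ofReal t < c} :=
    measurableSet_lt (ENNReal.measurable_ofReal) measurable_const
  rw [withDensity_apply w hmeas, Measure.restrict_restrict hmeas]
  have : {t : ℝ | ENNReal.ofReal t < c} ∩ Set.Ioi 0 = {t : ℝ | 0 < t ∧ ENNReal.ofReal t < c} := by
    ext t; simp [mem_setOf_eq, and_comm]
  rw [this, Wfun]

/-- Master characterization: levels of the double rearrangement vs `Wfun` of the
distribution function. -/
lemma lt_G_iff {α : Type*} [MeasurableSpace α] (μ : Measure α) (w : ℝ → ℝ≥0∞)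
    (f : α → ℝ) (t : ℝ) (s : ℝ≥0∞) :
    s < rearrE ((volume.restrict (Set.Ioi (0:ℝ))).withDensity w) (rearr μ f) t ↔
      ENNReal.ofReal t < Wfun w (μ {x | s < ENNReal.ofReal |f x|}) := by
  rw [lt_rearrE_iff]
  have hset : {t' : ℝ | s < rearr μ f t'}
      = {t' : ℝ | ENNReal.ofReal t' < μ {x | s < ENNReal.ofReal |f x|}} := by
    ext t'
    simp only [mem_setOf_eq, rearr_eq_rearrE]
    exact lt_rearrE_iff μ _ t' s
  rw [hset, withDensity_lt_set]

lemma calc_rpow (r : ℝ) (hr : 0 < r) (a : ℝ≥0∞) :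
    ∫⁻ u in {u : ℝ | 0 < u ∧ ENNReal.ofReal u < a}, ENNReal.ofReal (u ^ (r - 1))
      = ENNReal.ofReal (1/r) * a ^ r := by
  have hfin : ∀ b : ℝ, 0 < b →
      ∫⁻ u in {u : ℝ | 0 < u ∧ ENNReal.ofReal u < ENNReal.ofReal b}, ENNReal.ofReal (u ^ (r - 1))
        = ENNReal.ofReal (1/r) * (ENNReal.ofReal b) ^ r := by
    intro b hb
    have hset : {u : ℝ | 0 < u ∧ ENNReal.ofReal u < ENNReal.ofReal b} = Ioo 0 b := by
      ext u
      simp only [mem_setOf_eq, mem_Ioo]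
      constructor
      · rintro ⟨h1, h2⟩
        exact ⟨h1, (ENNReal.ofReal_lt_ofReal_iff_of_nonneg h1.le).1 h2⟩
      · rintro ⟨h1, h2⟩
        exact ⟨h1, (ENNReal.ofReal_lt_ofReal_iff_of_nonneg h1.le).2 h2⟩
    rw [hset]
    have hInt : IntegrableOn (fun u : ℝ => u ^ (r - 1)) (Ioo 0 b) := by
      have := (intervalIntegral.intervalIntegrable_rpow' (a := 0) (b := b)
        (r := r - 1) (by linarith)).1
      exact IntegrableOn.mono_set this Ioo_subset_Ioc_self
    have hnn : 0 ≤ᵐ[volume.restrict (Ioo 0 b)] fun u : ℝ => u ^ (r - 1) := by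
      filter_upwards [ae_restrict_mem measurableSet_Ioo] with u hu
      exact Real.rpow_nonneg hu.1.le _
    rw [← ofReal_integral_eq_lintegral_ofReal hInt hnn]
    have : ∫ u in Ioo 0 b, u ^ (r - 1) = b ^ r / r := by
      rw [← integral_Ioc_eq_integral_Ioo, ← intervalIntegral.integral_of_le hb.le,
        integral_rpow (Or.inl (by linarith))]
      rw [Real.zero_rpow (by linarith : r - 1 + 1 ≠ 0)]
      ring_nf
    rw [this, ENNReal.ofReal_rpow_of_pos hb, ← ENNReal.ofReal_mul (by positivity)]
    ring_nf
  rcases eq_or_ne a ⊤ with rfl | ha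
  · have hIoi : {u : ℝ | 0 < u ∧ ENNReal.ofReal u < ⊤} = Ioi 0 := by
      ext u; simp [ENNReal.ofReal_lt_top]
    rw [hIoi]
    have htop : ∫⁻ u in Ioi (0:ℝ), ENNReal.ofReal (u ^ (r - 1)) = ⊤ := by
      by_contra hne
      have hlt : ∫⁻ u in Ioi (0:ℝ), ENNReal.ofReal (u ^ (r - 1)) < ⊤ := lt_top_iff_ne_top.2 hne
      -- for each n, the integral over Ioo 0 n is ≤ the total
      have hle : ∀ n : ℕ, ENNReal.ofReal ((n:ℝ) ^ r / r)
          ≤ ∫⁻ u in Ioi (0:ℝ), ENNReal.ofReal (u ^ (r - 1)) := by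
        intro n
        rcases Nat.eq_zero_or_pos n with rfl | hn
        · simp [Real.zero_rpow hr.ne']
        have hnpos : (0:ℝ) < n := by exact_mod_cast hn
        have := hfin n hnpos
        have hsub : {u : ℝ | 0 < u ∧ ENNReal.ofReal u < ENNReal.ofReal n} ⊆ Ioi 0 :=
          fun u hu => hu.1
        calc ENNReal.ofReal ((n:ℝ) ^ r / r)
            = ENNReal.ofReal (1/r) * (ENNReal.ofReal n) ^ r := by
              rw [ENNReal.ofReal_rpow_of_pos hnpos, ← ENNReal.ofReal_mul (by positivity)]
              ring_nf
          _ = _ := this.symm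
          _ ≤ _ := lintegral_mono_set hsub
      have hbound : ∀ n : ℕ, (n:ℝ) ^ r / r ≤ (∫⁻ u in Ioi (0:ℝ), ENNReal.ofReal (u ^ (r - 1))).toReal := by
        intro n
        rcases le_or_gt ((n:ℝ) ^ r / r) 0 with h0 | h0
        · exact le_trans h0 ENNReal.toReal_nonneg
        · exact (ENNReal.ofReal_le_iff_le_toReal hne).1 (by simpa using hle n)
      have htend : Filter.Tendsto (fun n : ℕ => (n:ℝ) ^ r / r) Filter.atTop Filter.atTop := by
        apply Filter.Tendsto.atTop_div_const hr
        exact (tendsto_rpow_atTop hr).comp tendsto_natCast_atTop_atTop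
      obtain ⟨n, hn⟩ := (htend.eventually_gt_atTop
        ((∫⁻ u in Ioi (0:ℝ), ENNReal.ofReal (u ^ (r - 1))).toReal)).exists
      exact absurd (hbound n) (not_le.2 hn)
    rw [htop, ENNReal.top_rpow_of_pos hr, ENNReal.mul_top (by positivity)]
  rcases eq_or_ne a 0 with rfl | ha0
  · have : {u : ℝ | 0 < u ∧ ENNReal.ofReal u < 0} = ∅ :=
      eq_empty_iff_forall_notMem.2 fun u hu => (not_lt.2 (zero_le)) hu.2
    rw [this]
    simp [ENNReal.zero_rpow_of_pos hr]
  · have hb : 0 < a.toReal := ENNReal.toReal_pos ha0 ha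
    have := hfin a.toReal hb
    rwa [ENNReal.ofReal_toReal ha] at this

lemma h_comp_antitone (G : ℝ → ℝ≥0∞) (h : ℝ≥0∞ → ℝ≥0∞)
    (hGh : ∀ (t : ℝ) (s : ℝ≥0∞), s < G t ↔ ENNReal.ofReal t < h s) :
    Antitone (fun u : ℝ => h (ENNReal.ofReal u)) := by
  have hanti : Antitone h := by
    intro s s' hss'
    by_contra hlt
    push_neg at hlt
    obtain ⟨rr, _, h1, h2⟩ := ENNReal.lt_iff_exists_real_btwn.1 hlt
    have : s' < G rr := (hGh rr s').2 h2
    have : s < G rr := lt_of_le_of_lt hss' this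
    exact absurd ((hGh rr s).1 this) (not_lt.2 h1.le)
  exact fun u u' huu' => hanti (ENNReal.ofReal_le_ofReal huu')

lemma rep_finite (G : ℝ → ℝ≥0∞) (h : ℝ≥0∞ → ℝ≥0∞)
    (hGh : ∀ (t : ℝ) (s : ℝ≥0∞), s < G t ↔ ENNReal.ofReal t < h s)
    (p qr : ℝ) (hp : 0 < p) (hqr : 0 < qr) :
    ∫⁻ t in Ioi (0:ℝ), (G t) ^ qr * ENNReal.ofReal (t ^ (qr / p - 1))
      = ENNReal.ofReal p *
        ∫⁻ u in Ioi (0:ℝ), ENNReal.ofReal (u ^ (qr - 1)) * (h (ENNReal.ofReal u)) ^ (qr / p) := by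
  have hanti := h_comp_antitone G h hGh
  have hmeas_h : Measurable (fun u : ℝ => h (ENNReal.ofReal u)) := hanti.measurable
  -- the "kernel"
  set f : ℝ → ℝ → ℝ≥0∞ := fun t u =>
    (if ENNReal.ofReal t < h (ENNReal.ofReal u) then ENNReal.ofReal (u ^ (qr - 1)) else 0) *
      ENNReal.ofReal (t ^ (qr / p - 1)) with hf
  have hM : MeasurableSet {q : ℝ × ℝ | ENNReal.ofReal q.1 < h (ENNReal.ofReal q.2)} :=
    measurableSet_lt (ENNReal.measurable_ofReal.comp measurable_fst)
      (hmeas_h.comp measurable_snd)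
  have hKmeas : Measurable (Function.uncurry f) := by
    apply Measurable.mul
    · exact Measurable.ite hM
        ((ENNReal.measurable_ofReal.comp ((measurable_id.pow_const (qr-1)).comp measurable_snd)))
        measurable_const
    · exact ENNReal.measurable_ofReal.comp ((measurable_id.pow_const (qr/p-1)).comp measurable_fst)
  -- Claim 1 : inner integral in u
  have claim1 : ∀ t : ℝ,
      ∫⁻ u in Ioi (0:ℝ), (if ENNReal.ofReal t < h (ENNReal.ofReal u)
          then ENNReal.ofReal (u ^ (qr - 1)) else 0)
        = ENNReal.ofReal (1/qr) * (G t) ^ qr := by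
    intro t
    have hT : MeasurableSet {u : ℝ | ENNReal.ofReal t < h (ENNReal.ofReal u)} :=
      measurableSet_lt measurable_const hmeas_h
    have : (fun u : ℝ => (if ENNReal.ofReal t < h (ENNReal.ofReal u)
        then ENNReal.ofReal (u ^ (qr - 1)) else 0))
        = {u : ℝ | ENNReal.ofReal t < h (ENNReal.ofReal u)}.indicator
            (fun u => ENNReal.ofReal (u ^ (qr - 1))) := by
      funext u
      by_cases hc : ENNReal.ofReal t < h (ENNReal.ofReal u) <;> simp [hc, indicator]
    rw [this, lintegral_indicator hT, Measure.restrict_restrict hT]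
    have hseteq : {u : ℝ | ENNReal.ofReal t < h (ENNReal.ofReal u)} ∩ Ioi 0
        = {u : ℝ | 0 < u ∧ ENNReal.ofReal u < G t} := by
      ext u
      simp only [mem_inter_iff, mem_setOf_eq, mem_Ioi]
      rw [← hGh t (ENNReal.ofReal u)]
      tauto
    rw [hseteq, calc_rpow qr hqr (G t)]
  -- Claim 2 : inner integral in t
  have claim2 : ∀ u : ℝ,
      ∫⁻ t in Ioi (0:ℝ), (if ENNReal.ofReal t < h (ENNReal.ofReal u)
          then ENNReal.ofReal (t ^ (qr / p - 1)) else 0)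
        = ENNReal.ofReal (p/qr) * (h (ENNReal.ofReal u)) ^ (qr / p) := by
    intro u
    have hT : MeasurableSet {t : ℝ | ENNReal.ofReal t < h (ENNReal.ofReal u)} :=
      measurableSet_lt ENNReal.measurable_ofReal measurable_const
    have : (fun t : ℝ => (if ENNReal.ofReal t < h (ENNReal.ofReal u)
        then ENNReal.ofReal (t ^ (qr / p - 1)) else 0))
        = {t : ℝ | ENNReal.ofReal t < h (ENNReal.ofReal u)}.indicator
            (fun t => ENNReal.ofReal (t ^ (qr / p - 1))) := by
      funext t
      by_cases hc : ENNReal.ofReal t < h (ENNReal.ofReal u) <;> simp [hc, indicator]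
    rw [this, lintegral_indicator hT, Measure.restrict_restrict hT]
    have hseteq : {t : ℝ | ENNReal.ofReal t < h (ENNReal.ofReal u)} ∩ Ioi 0
        = {t : ℝ | 0 < t ∧ ENNReal.ofReal t < h (ENNReal.ofReal u)} := by
      ext t
      simp only [mem_inter_iff, mem_setOf_eq, mem_Ioi]
      tauto
    rw [hseteq, calc_rpow (qr/p) (by positivity) (h (ENNReal.ofReal u))]
    congr 2
    field_simp
  -- main computation
  have step1 : ∫⁻ t in Ioi (0:ℝ), (G t) ^ qr * ENNReal.ofReal (t ^ (qr / p - 1))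
      = ENNReal.ofReal qr * ∫⁻ t in Ioi (0:ℝ), ∫⁻ u in Ioi (0:ℝ), f t u := by
    rw [← lintegral_const_mul' _ _ (by simp : ENNReal.ofReal qr ≠ ⊤)]
    apply lintegral_congr
    intro t
    have : ∫⁻ u in Ioi (0:ℝ), f t u
        = (∫⁻ u in Ioi (0:ℝ), (if ENNReal.ofReal t < h (ENNReal.ofReal u)
            then ENNReal.ofReal (u ^ (qr - 1)) else 0)) * ENNReal.ofReal (t ^ (qr / p - 1)) := by
      rw [← lintegral_mul_const' _ _ (by simp : ENNReal.ofReal (t ^ (qr / p - 1)) ≠ ⊤)]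
    rw [this, claim1 t, ← mul_assoc, ← mul_assoc, ← ENNReal.ofReal_mul hqr.le]
    rw [mul_one_div, div_self hqr.ne', ENNReal.ofReal_one, one_mul]
  have step2 : ∫⁻ t in Ioi (0:ℝ), ∫⁻ u in Ioi (0:ℝ), f t u
      = ∫⁻ u in Ioi (0:ℝ), ∫⁻ t in Ioi (0:ℝ), f t u := by
    exact lintegral_lintegral_swap hKmeas.aemeasurable
  have step3 : ∫⁻ u in Ioi (0:ℝ), ∫⁻ t in Ioi (0:ℝ), f t u
      = ENNReal.ofReal (p/qr) *
        ∫⁻ u in Ioi (0:ℝ), ENNReal.ofReal (u ^ (qr - 1)) * (h (ENNReal.ofReal u)) ^ (qr / p) := by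
    rw [← lintegral_const_mul' _ _ (by simp : ENNReal.ofReal (p/qr) ≠ ⊤)]
    apply lintegral_congr
    intro u
    have hfeq : ∀ t : ℝ, f t u = ENNReal.ofReal (u ^ (qr - 1)) *
        (if ENNReal.ofReal t < h (ENNReal.ofReal u)
          then ENNReal.ofReal (t ^ (qr / p - 1)) else 0) := by
      intro t
      rw [hf]
      by_cases hc : ENNReal.ofReal t < h (ENNReal.ofReal u) <;> simp [hc, mul_comm]
    simp only [hfeq]
    rw [lintegral_const_mul' _ _ (by simp : ENNReal.ofReal (u ^ (qr - 1)) ≠ ⊤), claim2 u]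
    ring
  rw [step1, step2, step3, ← mul_assoc, ← ENNReal.ofReal_mul hqr.le]
  congr 2
  field_simp

lemma sSup_Iio_enn (a : ℝ≥0∞) : sSup (Iio a) = a := by
  refine le_antisymm (sSup_le fun b hb => le_of_lt hb) ?_
  by_contra h
  push_neg at h
  obtain ⟨c, hc1, hc2⟩ := exists_between h
  exact absurd (le_sSup (show c ∈ Iio a from hc2)) (not_le.2 hc1)

lemma sup_rpow_aux (c : ℝ≥0∞) (r : ℝ) (hr : 0 < r) :
    (⨆ (t : ℝ) (_ : 0 < t ∧ ENNReal.ofReal t < c), (ENNReal.ofReal t) ^ r) = c ^ r := by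
  refine le_antisymm ?_ ?_
  · exact iSup₂_le fun t ht => ENNReal.rpow_le_rpow ht.2.le hr.le
  · refine le_of_forall_lt fun d hd => ?_
    have hdne : d ≠ ⊤ := (lt_of_lt_of_le hd le_top).ne
    have hdr : d ^ r⁻¹ < c := by
      have := ENNReal.rpow_lt_rpow hd (by positivity : (0:ℝ) < r⁻¹)
      rwa [ENNReal.rpow_rpow_inv hr.ne' c] at this
    obtain ⟨t, ht0, ht1, ht2⟩ := ENNReal.lt_iff_exists_real_btwn.1 hdr
    have htpos : 0 < t := by
      by_contra h0
      push_neg at h0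
      rw [ENNReal.ofReal_eq_zero.2 h0] at ht1
      exact absurd ht1 (not_lt.2 (zero_le))
    have : d < (ENNReal.ofReal t) ^ r := by
      have := ENNReal.rpow_lt_rpow ht1 hr
      rwa [ENNReal.rpow_inv_rpow hr.ne' d] at this
    exact lt_of_lt_of_le this (le_iSup₂ (f := fun (t : ℝ) (_ : 0 < t ∧ ENNReal.ofReal t < c)
      => (ENNReal.ofReal t) ^ r) t ⟨htpos, ht2⟩)

lemma rep_top (G : ℝ → ℝ≥0∞) (h : ℝ≥0∞ → ℝ≥0∞)
    (hGh : ∀ (t : ℝ) (s : ℝ≥0∞), s < G t ↔ ENNReal.ofReal t < h s)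
    (p : ℝ) (hp : 0 < p) :
    ⨆ t ∈ Ioi (0:ℝ), ENNReal.ofReal (t ^ (1/p)) * G t = ⨆ s : ℝ≥0∞, s * (h s) ^ (1/p) := by
  have hppos : (0:ℝ) < 1/p := by positivity
  refine le_antisymm ?_ ?_
  · refine iSup₂_le fun t (ht : 0 < t) => ?_
    have hGt : G t = ⨆ (s : ℝ≥0∞) (_ : s < G t), s := by
      conv_lhs => rw [← sSup_Iio_enn (G t)]
      rw [sSup_eq_iSup]
      rfl
    rw [hGt, ENNReal.mul_iSup]
    refine iSup_le fun s => ?_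
    rw [ENNReal.mul_iSup]
    refine iSup_le fun hs => ?_
    have hth : ENNReal.ofReal t < h s := (hGh t s).1 hs
    calc ENNReal.ofReal (t ^ (1/p)) * s = (ENNReal.ofReal t) ^ (1/p) * s := by
          rw [ENNReal.ofReal_rpow_of_pos ht]
      _ ≤ (h s) ^ (1/p) * s := by
          exact mul_le_mul_left (ENNReal.rpow_le_rpow hth.le hppos.le) s
      _ = s * (h s) ^ (1/p) := mul_comm _ _
      _ ≤ ⨆ s : ℝ≥0∞, s * (h s) ^ (1/p) := le_iSup (fun s : ℝ≥0∞ => s * (h s) ^ (1/p)) s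
  · refine iSup_le fun s => ?_
    rw [← sup_rpow_aux (h s) (1/p) hppos, ENNReal.mul_iSup]
    refine iSup_le fun t => ?_
    rw [ENNReal.mul_iSup]
    refine iSup_le fun ht => ?_
    have hsG : s < G t := (hGh t s).2 ht.2
    calc s * (ENNReal.ofReal t) ^ (1/p) = (ENNReal.ofReal t) ^ (1/p) * s := mul_comm _ _
      _ ≤ (ENNReal.ofReal t) ^ (1/p) * G t := mul_le_mul_right hsG.le _
      _ = ENNReal.ofReal (t ^ (1/p)) * G t := by rw [ENNReal.ofReal_rpow_of_pos ht.1]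
      _ ≤ _ := le_iSup₂ (f := fun (t : ℝ) (_ : t ∈ Ioi (0:ℝ)) => ENNReal.ofReal (t ^ (1/p)) * G t)
            t ht.1

lemma add_rpow_le_two_rpow (x y : ℝ≥0∞) (r : ℝ) (hr : 0 ≤ r) :
    (x + y) ^ r ≤ 2 ^ r * (x ^ r + y ^ r) := by
  have h1 : x + y ≤ 2 * max x y := by
    rcases le_total x y with h | h
    · calc x + y ≤ y + y := add_le_add_left h y
        _ = 2 * y := (two_mul y).symm
        _ ≤ 2 * max x y := mul_le_mul_right (le_max_right x y) 2
    · calc x + y ≤ x + x := add_le_add_right h x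
        _ = 2 * x := (two_mul x).symm
        _ ≤ 2 * max x y := mul_le_mul_right (le_max_left x y) 2
  calc (x + y) ^ r ≤ (2 * max x y) ^ r := ENNReal.rpow_le_rpow h1 hr
    _ = 2 ^ r * (max x y) ^ r := ENNReal.mul_rpow_of_nonneg _ _ hr
    _ ≤ 2 ^ r * (x ^ r + y ^ r) := by
        refine mul_le_mul_right ?_ _
        rcases le_total x y with h | h
        · rw [max_eq_right h]; exact le_add_self
        · rw [max_eq_left h]; exact le_self_add

/-- The composition `W ∘ λ_f`. -/
noncomputable def Hfun {α : Type*} [MeasurableSpace α] (μ : Measure α)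
    (w : ℝ → ℝ≥0∞) (f : α → ℝ) (s : ℝ≥0∞) : ℝ≥0∞ :=
  Wfun w (μ {x | s < ENNReal.ofReal |f x|})

lemma lamNorm_eq_finite {α : Type*} [MeasurableSpace α] (μ : Measure α)
    (w : ℝ → ℝ≥0∞) (p : ℝ) (q : ℝ≥0∞) (f : α → ℝ)
    (hp : 0 < p) (hq : 0 < q) (hqt : q ≠ ⊤) :
    lamNorm μ w p q f = (ENNReal.ofReal p *
      ∫⁻ u in Ioi (0:ℝ), ENNReal.ofReal (u ^ (q.toReal - 1)) *
        (Hfun μ w f (ENNReal.ofReal u)) ^ (q.toReal / p)) ^ (1 / q.toReal) := by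
  have hqr : 0 < q.toReal := ENNReal.toReal_pos hq.ne' hqt
  rw [lamNorm, if_neg hqt]
  congr 1
  exact rep_finite _ (Hfun μ w f) (fun t s => lt_G_iff μ w f t s) p q.toReal hp hqr

lemma lamNorm_eq_top {α : Type*} [MeasurableSpace α] (μ : Measure α)
    (w : ℝ → ℝ≥0∞) (p : ℝ) (f : α → ℝ) (hp : 0 < p) :
    lamNorm μ w p ⊤ f = ⨆ s : ℝ≥0∞, s * (Hfun μ w f s) ^ (1/p) := by
  rw [lamNorm, if_pos rfl]
  exact rep_top _ (Hfun μ w f) (fun t s => lt_G_iff μ w f t s) p hp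

lemma eq_of_forall_lt_iff' {a b : ℝ≥0∞} (h : ∀ s, s < a ↔ s < b) : a = b := by
  refine le_antisymm (le_of_forall_lt fun c hc => (h c).1 hc)
    (le_of_forall_lt fun c hc => (h c).2 hc)

lemma rearrE_smul {α : Type*} [MeasurableSpace α] (ν : Measure α) (g : α → ℝ≥0∞)
    (a : ℝ≥0∞) (ha0 : a ≠ 0) (hat : a ≠ ⊤) (t : ℝ) :
    rearrE ν (fun x => a * g x) t = a * rearrE ν g t := by
  refine eq_of_forall_lt_iff' fun s => ?_
  have hdiv : ∀ x : ℝ≥0∞, s / a < x ↔ s < a * x := by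
    intro x
    rw [ENNReal.div_lt_iff (Or.inl ha0) (Or.inl hat), mul_comm]
  have h1 := lt_rearrE_iff ν (fun x => a * g x) t s
  have h2 := lt_rearrE_iff ν g t (s / a)
  have hset : {x | s < a * g x} = {x | s / a < g x} := by
    ext x; exact (hdiv (g x)).symm
  rw [h1, hset, ← h2]
  exact hdiv _

lemma rearr_zero {α : Type*} [MeasurableSpace α] (μ : Measure α) (t : ℝ) :
    rearr μ (0 : α → ℝ) t = 0 := by
  rw [rearr]
  refine le_antisymm (sInf_le ?_) (zero_le)
  have : {x : α | (0:ℝ≥0∞) < ENNReal.ofReal |(0:α → ℝ) x|} = ∅ := by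
    ext x; simp
  simp [this]

lemma rearrE_zero {α : Type*} [MeasurableSpace α] (ν : Measure α) (t : ℝ) :
    rearrE ν (fun _ => (0:ℝ≥0∞)) t = 0 := by
  rw [rearrE]
  refine le_antisymm (sInf_le ?_) (zero_le)
  have : {x : α | (0:ℝ≥0∞) < (0:ℝ≥0∞)} = ∅ := by ext x; simp
  simp [this]

lemma lamNorm_zero {α : Type*} [MeasurableSpace α] (μ : Measure α)
    (w : ℝ → ℝ≥0∞) (p : ℝ) (q : ℝ≥0∞) (hq : 0 < q) :
    lamNorm μ w p q (0 : α → ℝ) = 0 := by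
  have hre : ∀ t : ℝ, rearrE ((volume.restrict (Set.Ioi (0:ℝ))).withDensity w)
      (rearr μ (0 : α → ℝ)) t = 0 := by
    intro t
    have : rearr μ (0 : α → ℝ) = fun _ => (0:ℝ≥0∞) := funext (rearr_zero μ)
    rw [this, rearrE_zero]
  rw [lamNorm]
  split_ifs with hqt
  · simp [hre]
  · have hqr : 0 < q.toReal := ENNReal.toReal_pos hq.ne' hqt
    have : ∀ t : ℝ, (rearrE ((volume.restrict (Set.Ioi (0:ℝ))).withDensity w)
        (rearr μ (0 : α → ℝ)) t) ^ q.toReal * ENNReal.ofReal (t ^ (q.toReal / p - 1)) = 0 := by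
      intro t
      rw [hre t, ENNReal.zero_rpow_of_pos hqr, zero_mul]
    rw [lintegral_congr this, lintegral_zero]
    exact ENNReal.zero_rpow_of_pos (by positivity)

lemma lamNorm_smul {α : Type*} [MeasurableSpace α] (μ : Measure α)
    (w : ℝ → ℝ≥0∞) (p : ℝ) (q : ℝ≥0∞) (hp : 0 < p) (hq : 0 < q)
    (f : α → ℝ) (c : ℝ) :
    lamNorm μ w p q (c • f) = ENNReal.ofReal |c| * lamNorm μ w p q f := by
  rcases eq_or_ne c 0 with rfl | hc
  · simp only [zero_smul, abs_zero, ENNReal.ofReal_zero, zero_mul]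
    exact lamNorm_zero μ w p q hq
  have habs : 0 < |c| := abs_pos.2 hc
  set a : ℝ≥0∞ := ENNReal.ofReal |c| with ha
  have ha0 : a ≠ 0 := by rw [ha, Ne, ENNReal.ofReal_eq_zero, not_le]; exact habs
  have hat : a ≠ ⊤ := ENNReal.ofReal_ne_top
  have hrearr : rearr μ (c • f) = fun t => a * rearr μ f t := by
    funext t
    have : (fun x => ENNReal.ofReal |(c • f) x|) = fun x => a * ENNReal.ofReal |f x| := by
      funext x
      simp only [Pi.smul_apply, smul_eq_mul, abs_mul, ha]
      rw [ENNReal.ofReal_mul habs.le]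
    rw [rearr_eq_rearrE, this, rearrE_smul μ _ a ha0 hat t, rearr_eq_rearrE]
  have hG : ∀ t : ℝ, rearrE ((volume.restrict (Set.Ioi (0:ℝ))).withDensity w)
      (rearr μ (c • f)) t
      = a * rearrE ((volume.restrict (Set.Ioi (0:ℝ))).withDensity w) (rearr μ f) t := by
    intro t
    rw [hrearr]
    exact rearrE_smul _ _ a ha0 hat t
  rw [lamNorm, lamNorm]
  split_ifs with hqt
  · simp only [hG]
    rw [ENNReal.mul_iSup]
    refine iSup_congr fun t => ?_
    rw [ENNReal.mul_iSup]
    refine iSup_congr fun ht => ?_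
    ring
  · have hqr : 0 < q.toReal := ENNReal.toReal_pos hq.ne' hqt
    simp only [hG]
    have : ∀ t : ℝ, (a * rearrE ((volume.restrict (Set.Ioi (0:ℝ))).withDensity w)
          (rearr μ f) t) ^ q.toReal * ENNReal.ofReal (t ^ (q.toReal / p - 1))
        = a ^ q.toReal * ((rearrE ((volume.restrict (Set.Ioi (0:ℝ))).withDensity w)
          (rearr μ f) t) ^ q.toReal * ENNReal.ofReal (t ^ (q.toReal / p - 1))) := by
      intro t
      rw [ENNReal.mul_rpow_of_nonneg _ _ hqr.le]
      ring
    rw [lintegral_congr this,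
      lintegral_const_mul' _ _ (ENNReal.rpow_ne_top_of_nonneg hqr.le hat),
      ENNReal.mul_rpow_of_nonneg _ _ (by positivity : (0:ℝ) ≤ 1/q.toReal),
      ← ENNReal.rpow_mul, mul_one_div, div_self hqr.ne', ENNReal.rpow_one]

lemma rearrE_mono_fn {α : Type*} [MeasurableSpace α] (ν : Measure α)
    {g g' : α → ℝ≥0∞} (h : ∀ x, g x ≤ g' x) (t : ℝ) :
    rearrE ν g t ≤ rearrE ν g' t := by
  refine sInf_le_sInf fun s hs => ?_
  exact le_trans (measure_mono fun x hx => lt_of_lt_of_le hx (h x)) hs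

lemma lamNorm_mono {α : Type*} [MeasurableSpace α] (μ : Measure α)
    (w : ℝ → ℝ≥0∞) (p : ℝ) (q : ℝ≥0∞) {f g : α → ℝ}
    (hfg : ∀ x, |f x| ≤ |g x|) :
    lamNorm μ w p q f ≤ lamNorm μ w p q g := by
  have hr : ∀ t : ℝ, rearr μ f t ≤ rearr μ g t := by
    intro t
    rw [rearr_eq_rearrE, rearr_eq_rearrE]
    exact rearrE_mono_fn μ (fun x => ENNReal.ofReal_le_ofReal (hfg x)) t
  have hG : ∀ t : ℝ, rearrE ((volume.restrict (Set.Ioi (0:ℝ))).withDensity w) (rearr μ f) t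
      ≤ rearrE ((volume.restrict (Set.Ioi (0:ℝ))).withDensity w) (rearr μ g) t :=
    fun t => rearrE_mono_fn _ hr t
  rw [lamNorm, lamNorm]
  split_ifs with hqt
  · exact iSup₂_mono fun t ht => mul_le_mul_right (hG t) _
  · refine ENNReal.rpow_le_rpow (lintegral_mono fun t => ?_) (by positivity)
    exact mul_le_mul_left (ENNReal.rpow_le_rpow (hG t) ENNReal.toReal_nonneg) _

lemma Hfun_anti {α : Type*} [MeasurableSpace α] (μ : Measure α)
    (w : ℝ → ℝ≥0∞) (f : α → ℝ) : Antitone (Hfun μ w f) :=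
  fun _ _ h => Wfun_mono w (measure_mono (fun _ hx => lt_of_le_of_lt h hx))

lemma Hfun_indicator {α : Type*} [MeasurableSpace α] (μ : Measure α)
    (w : ℝ → ℝ≥0∞) (A : Set α) (s : ℝ≥0∞) :
    Hfun μ w (A.indicator fun _ => (1:ℝ)) s = if s < 1 then Wfun w (μ A) else 0 := by
  rw [Hfun]
  by_cases hs : s < 1
  · rw [if_pos hs]
    congr 2
    ext x
    by_cases hx : x ∈ A
    · simp [indicator_of_mem hx, hs, hx]
    · simp [indicator_of_notMem hx, hx]
  · rw [if_neg hs]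
    push_neg at hs
    have : {x | s < ENNReal.ofReal |A.indicator (fun _ => (1:ℝ)) x|} = ∅ := by
      ext x
      by_cases hx : x ∈ A
      · simp [indicator_of_mem hx, not_lt.2 hs]
      · simp [indicator_of_notMem hx]
    rw [this]
    simp [Wfun_zero]

lemma lamNorm_indicator {α : Type*} [MeasurableSpace α] (μ : Measure α)
    (w : ℝ → ℝ≥0∞) (p : ℝ) (q : ℝ≥0∞) (hp : 0 < p) (hq : 0 < q) :
    ∃ κ : ℝ≥0∞, κ ≠ 0 ∧ κ ≠ ⊤ ∧ ∀ B : Set α,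
      lamNorm μ w p q (B.indicator fun _ => (1:ℝ)) = κ * (Wfun w (μ B)) ^ (1/p) := by
  by_cases hqt : q = ⊤
  · subst hqt
    refine ⟨1, one_ne_zero, ENNReal.one_ne_top, fun B => ?_⟩
    rw [lamNorm_eq_top μ w p _ hp, one_mul]
    simp only [Hfun_indicator]
    set WB := Wfun w (μ B) with hWB
    refine le_antisymm (iSup_le fun s => ?_) ?_
    · by_cases hs : s < 1
      · rw [if_pos hs]
        calc s * WB ^ (1/p) ≤ 1 * WB ^ (1/p) := mul_le_mul_left hs.le _
          _ = WB ^ (1/p) := one_mul _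
      · rw [if_neg hs, ENNReal.zero_rpow_of_pos (by positivity), mul_zero]
        exact zero_le
    · have h1 : WB ^ (1/p) = (sSup (Iio (1:ℝ≥0∞))) * WB ^ (1/p) := by
        rw [sSup_Iio_enn]; rw [one_mul]
      rw [h1, sSup_eq_iSup]
      rw [ENNReal.iSup_mul]
      refine iSup_le fun s => ?_
      rw [ENNReal.iSup_mul]
      refine iSup_le fun hs => ?_
      calc s * WB ^ (1/p) = s * (if s < 1 then WB else 0) ^ (1/p) := by rw [if_pos (mem_Iio.1 hs)]
        _ ≤ ⨆ s' : ℝ≥0∞, s' * (if s' < 1 then WB else 0) ^ (1/p) :=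
            le_iSup (fun s' : ℝ≥0∞ => s' * (if s' < 1 then WB else 0) ^ (1/p)) s
  · have hqr : 0 < q.toReal := ENNReal.toReal_pos hq.ne' hqt
    refine ⟨(ENNReal.ofReal (p * (1/q.toReal))) ^ (1/q.toReal), ?_, ?_, fun B => ?_⟩
    · rw [Ne, ENNReal.rpow_eq_zero_iff]
      push_neg
      constructor
      · intro h0
        exact absurd h0 (by positivity)
      · intro h0
        exact absurd h0 ENNReal.ofReal_ne_top
    · exact ENNReal.rpow_ne_top_of_nonneg (by positivity) ENNReal.ofReal_ne_top
    · rw [lamNorm_eq_finite μ w p q _ hp hq hqt]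
      simp only [Hfun_indicator]
      set WB := Wfun w (μ B) with hWB
      have hint : ∀ u : ℝ, ENNReal.ofReal (u ^ (q.toReal - 1)) *
          (if ENNReal.ofReal u < 1 then WB else 0) ^ (q.toReal / p)
          = WB ^ (q.toReal / p) *
            ({u : ℝ | ENNReal.ofReal u < 1}.indicator
              (fun u => ENNReal.ofReal (u ^ (q.toReal - 1))) u) := by
        intro u
        by_cases hu : ENNReal.ofReal u < (1:ℝ≥0∞)
        · rw [if_pos hu]
          simp only [Set.indicator_apply, mem_setOf_eq, if_pos hu]
          ring
        · rw [if_neg hu]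
          simp only [Set.indicator_apply, mem_setOf_eq, if_neg hu,
            ENNReal.zero_rpow_of_pos (by positivity : (0:ℝ) < q.toReal / p), mul_zero]
      rw [lintegral_congr hint, lintegral_const_mul _ (by
          exact (ENNReal.measurable_ofReal.comp (measurable_id.pow_const _)).indicator
            (measurableSet_lt ENNReal.measurable_ofReal measurable_const)),
        lintegral_indicator (measurableSet_lt ENNReal.measurable_ofReal measurable_const),
        Measure.restrict_restrict (measurableSet_lt ENNReal.measurable_ofReal measurable_const)]
      have hseteq : {u : ℝ | ENNReal.ofReal u < 1} ∩ Ioi 0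
          = {u : ℝ | 0 < u ∧ ENNReal.ofReal u < 1} := by
        ext u; simp only [mem_inter_iff, mem_setOf_eq, mem_Ioi]; tauto
      rw [hseteq, calc_rpow q.toReal hqr 1, ENNReal.one_rpow, mul_one]
      rw [← mul_assoc, mul_comm (ENNReal.ofReal p) (WB ^ (q.toReal/p)), mul_assoc,
        ← ENNReal.ofReal_mul hp.le,
        ENNReal.mul_rpow_of_nonneg _ _ (by positivity : (0:ℝ) ≤ 1/q.toReal),
        ← ENNReal.rpow_mul, mul_comm]
      congr 2
      field_simp

section backward
variable {α : Type*} [MeasurableSpace α] (μ : Measure α) (w : ℝ → ℝ≥0∞)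
  (p : ℝ) (C : ℝ≥0)
  (hC : ∀ A B : Set α, MeasurableSet A → MeasurableSet B → μ (A ∪ B) ≠ 0 →
      Wfun w (μ (A ∪ B)) ≠ 0 ∧ Wfun w (μ (A ∪ B)) ≤ C * (Wfun w (μ A) + Wfun w (μ B)))

include hC in
lemma Hfun_add_le (f g : α → ℝ) (hf : Measurable f) (hg : Measurable g) (s : ℝ≥0∞) :
    Hfun μ w (f + g) s ≤ C * (Hfun μ w f (s/2) + Hfun μ w g (s/2)) := by
  set A := {x | s/2 < ENNReal.ofReal |f x|} with hA'
  set B := {x | s/2 < ENNReal.ofReal |g x|} with hB'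
  have hA : MeasurableSet A :=
    measurableSet_lt measurable_const (ENNReal.measurable_ofReal.comp hf.abs)
  have hB : MeasurableSet B :=
    measurableSet_lt measurable_const (ENNReal.measurable_ofReal.comp hg.abs)
  have hsub : {x | s < ENNReal.ofReal |(f + g) x|} ⊆ A ∪ B := by
    intro x hx
    by_contra hx'
    rw [mem_union] at hx'
    push_neg at hx'
    obtain ⟨hxA, hxB⟩ := hx'
    have h1 : ENNReal.ofReal |f x| ≤ s/2 := not_lt.1 hxA
    have h2 : ENNReal.ofReal |g x| ≤ s/2 := not_lt.1 hxB
    have : ENNReal.ofReal |(f + g) x| ≤ s := by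
      calc ENNReal.ofReal |(f + g) x| = ENNReal.ofReal |f x + g x| := rfl
        _ ≤ ENNReal.ofReal (|f x| + |g x|) := ENNReal.ofReal_le_ofReal (abs_add_le _ _)
        _ ≤ ENNReal.ofReal |f x| + ENNReal.ofReal |g x| := ENNReal.ofReal_add_le
        _ ≤ s/2 + s/2 := add_le_add h1 h2
        _ = s := ENNReal.add_halves s
    exact absurd hx (not_lt.2 this)
  have hle : Hfun μ w (f + g) s ≤ Wfun w (μ (A ∪ B)) :=
    Wfun_mono w (measure_mono hsub)
  rcases eq_or_ne (μ (A ∪ B)) 0 with h0 | h0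
  · have : Hfun μ w (f + g) s ≤ 0 := by
      rw [h0, Wfun_zero] at hle
      exact hle
    exact le_trans this (zero_le)
  · exact le_trans hle (hC A B hA hB h0).2

include hC in
lemma nondeg_backward (hp : 0 < p) (q : ℝ≥0∞) (hq : 0 < q)
    (f : α → ℝ) (hf : Measurable f) (h0 : lamNorm μ w p q f = 0) : f =ᵐ[μ] 0 := by
  have key : ∀ n : ℕ, μ {x | ((n:ℝ)+1)⁻¹ < |f x|} = 0 := by
    intro n
    by_contra hn
    set A := {x | ((n:ℝ)+1)⁻¹ < |f x|} with hAdef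
    have hA : MeasurableSet A := measurableSet_lt measurable_const hf.abs
    have hAA : μ (A ∪ A) ≠ 0 := by rwa [union_self]
    obtain ⟨hWne, _⟩ := hC A A hA hA hAA
    rw [union_self] at hWne
    set u : ℝ := ((n:ℝ)+2)⁻¹ with hudef
    have hu : 0 < u := by positivity
    have hsubA : A ⊆ {x | ENNReal.ofReal u < ENNReal.ofReal |f x|} := by
      intro x hx
      have h1 : u < ((n:ℝ)+1)⁻¹ := by
        rw [hudef]
        apply inv_strictAnti₀ (by positivity)
        linarith
      have h2 : u < |f x| := lt_trans h1 hx
      exact (ENNReal.ofReal_lt_ofReal_iff_of_nonneg hu.le).2 h2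
    have hHge : Wfun w (μ A) ≤ Hfun μ w f (ENNReal.ofReal u) :=
      Wfun_mono w (measure_mono hsubA)
    have hH : Hfun μ w f (ENNReal.ofReal u) ≠ 0 := by
      intro h
      rw [h] at hHge
      exact hWne (le_antisymm hHge (zero_le))
    by_cases hqt : q = ⊤
    · subst hqt
      rw [lamNorm_eq_top μ w p f hp] at h0
      have hterm := le_iSup (fun s : ℝ≥0∞ => s * (Hfun μ w f s) ^ (1/p)) (ENNReal.ofReal u)
      rw [h0, le_zero_iff, mul_eq_zero] at hterm
      rcases hterm with h | h
      · exact absurd h (by simp [ENNReal.ofReal_eq_zero, not_le, hu])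
      · rw [ENNReal.rpow_eq_zero_iff] at h
        rcases h with ⟨h1, _⟩ | ⟨_, h2⟩
        · exact hH h1
        · exact absurd h2 (not_lt.2 (by positivity))
    · have hqr : 0 < q.toReal := ENNReal.toReal_pos hq.ne' hqt
      rw [lamNorm_eq_finite μ w p q f hp hq hqt] at h0
      rw [ENNReal.rpow_eq_zero_iff] at h0
      have hbase : ENNReal.ofReal p *
          (∫⁻ u' in Ioi (0:ℝ), ENNReal.ofReal (u' ^ (q.toReal - 1)) *
            (Hfun μ w f (ENNReal.ofReal u')) ^ (q.toReal / p)) = 0 := by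
        rcases h0 with ⟨h1, _⟩ | ⟨_, h2⟩
        · exact h1
        · exact absurd h2 (not_lt.2 (by positivity))
      rw [mul_eq_zero] at hbase
      rcases hbase with h1 | h1
      · exact absurd h1 (by simp [ENNReal.ofReal_eq_zero, not_le, hp])
      -- lower bound the integral
      set W0 := Hfun μ w f (ENNReal.ofReal u) with hW0
      have hmeasφ : Measurable (fun u' : ℝ =>
          ENNReal.ofReal (u' ^ (q.toReal - 1)) *
            (Hfun μ w f (ENNReal.ofReal u')) ^ (q.toReal / p)) := by
        apply Measurable.mul
        · exact ENNReal.measurable_ofReal.comp (measurable_id.pow_const _)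
        · exact (((Hfun_anti μ w f).comp_monotone
            (fun a b hab => ENNReal.ofReal_le_ofReal hab)).measurable).pow_const _
      have hlow : W0 ^ (q.toReal/p) * (ENNReal.ofReal (1/q.toReal) * (ENNReal.ofReal u) ^ q.toReal)
          ≤ ∫⁻ u' in Ioi (0:ℝ), ENNReal.ofReal (u' ^ (q.toReal - 1)) *
            (Hfun μ w f (ENNReal.ofReal u')) ^ (q.toReal / p) := by
        have hS : {u' : ℝ | 0 < u' ∧ ENNReal.ofReal u' < ENNReal.ofReal u} ⊆ Ioi 0 :=
          fun u' hu' => hu'.1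
        have hintS : ∫⁻ u' in {u' : ℝ | 0 < u' ∧ ENNReal.ofReal u' < ENNReal.ofReal u},
            (W0 ^ (q.toReal/p) * ENNReal.ofReal (u' ^ (q.toReal - 1)))
            = W0 ^ (q.toReal/p) * (ENNReal.ofReal (1/q.toReal) * (ENNReal.ofReal u) ^ q.toReal) := by
          rw [lintegral_const_mul _ ((measurable_id'.pow_const _).ennreal_ofReal),
            calc_rpow q.toReal hqr]
        calc W0 ^ (q.toReal/p) * (ENNReal.ofReal (1/q.toReal) * (ENNReal.ofReal u) ^ q.toReal)
            = ∫⁻ u' in {u' : ℝ | 0 < u' ∧ ENNReal.ofReal u' < ENNReal.ofReal u},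
              (W0 ^ (q.toReal/p) * ENNReal.ofReal (u' ^ (q.toReal - 1))) := hintS.symm
          _ ≤ ∫⁻ u' in {u' : ℝ | 0 < u' ∧ ENNReal.ofReal u' < ENNReal.ofReal u},
              ENNReal.ofReal (u' ^ (q.toReal - 1)) *
                (Hfun μ w f (ENNReal.ofReal u')) ^ (q.toReal / p) := by
              refine setLIntegral_mono hmeasφ fun u' hu' => ?_
              rw [mul_comm]
              exact mul_le_mul_right
                (ENNReal.rpow_le_rpow (Hfun_anti μ w f hu'.2.le) (by positivity)) _
          _ ≤ _ := lintegral_mono_set hS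
      rw [h1, le_zero_iff, mul_eq_zero] at hlow
      rcases hlow with h2 | h2
      · rw [ENNReal.rpow_eq_zero_iff] at h2
        rcases h2 with ⟨h3, _⟩ | ⟨_, h4⟩
        · exact hH h3
        · exact absurd h4 (not_lt.2 (by positivity))
      · rw [mul_eq_zero] at h2
        rcases h2 with h3 | h3
        · exact absurd h3 (by simp [ENNReal.ofReal_eq_zero, not_le, hqr])
        · rw [ENNReal.rpow_eq_zero_iff] at h3
          rcases h3 with ⟨h4, _⟩ | ⟨_, h5⟩
          · exact absurd h4 (by simp [ENNReal.ofReal_eq_zero, not_le, hu])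
          · exact absurd h5 (not_lt.2 (by positivity))
  refine ae_iff.2 ?_
  have hUeq : {a | ¬ f a = (0 : α → ℝ) a} = ⋃ n : ℕ, {x | ((n:ℝ)+1)⁻¹ < |f x|} := by
    ext a
    simp only [Pi.zero_apply, mem_setOf_eq, mem_iUnion]
    constructor
    · intro ha
      have : 0 < |f a| := abs_pos.2 ha
      obtain ⟨n, hn⟩ := exists_nat_one_div_lt this
      exact ⟨n, by rwa [one_div] at hn⟩
    · rintro ⟨n, hn⟩
      have : 0 < |f a| := lt_trans (by positivity) hn
      exact abs_pos.1 this
  rw [hUeq]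
  exact measure_iUnion_null key

include hC in
lemma triangle_top (hp : 0 < p) (f g : α → ℝ) (hf : Measurable f) (hg : Measurable g) :
    lamNorm μ w p ⊤ (f + g) ≤ ((C:ℝ≥0∞) ^ (1/p) * 2 ^ (1/p) * 2) *
      (lamNorm μ w p ⊤ f + lamNorm μ w p ⊤ g) := by
  rw [lamNorm_eq_top μ w p (f+g) hp, lamNorm_eq_top μ w p f hp, lamNorm_eq_top μ w p g hp]
  set Nf := ⨆ s : ℝ≥0∞, s * (Hfun μ w f s) ^ (1/p) with hNf
  set Ng := ⨆ s : ℝ≥0∞, s * (Hfun μ w g s) ^ (1/p) with hNg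
  refine iSup_le fun s => ?_
  have hkey := Hfun_add_le μ w C hC f g hf hg s
  have hs2 : (2:ℝ≥0∞) * (s/2) = s := ENNReal.mul_div_cancel' (by norm_num) (by norm_num)
  have hf2 : (s/2) * (Hfun μ w f (s/2)) ^ (1/p) ≤ Nf :=
    le_iSup (fun s' : ℝ≥0∞ => s' * (Hfun μ w f s') ^ (1/p)) (s/2)
  have hg2 : (s/2) * (Hfun μ w g (s/2)) ^ (1/p) ≤ Ng :=
    le_iSup (fun s' : ℝ≥0∞ => s' * (Hfun μ w g s') ^ (1/p)) (s/2)
  calc s * (Hfun μ w (f + g) s) ^ (1/p)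
      ≤ s * ((C:ℝ≥0∞) * (Hfun μ w f (s/2) + Hfun μ w g (s/2))) ^ (1/p) :=
        mul_le_mul_right (ENNReal.rpow_le_rpow hkey (by positivity)) s
    _ = s * ((C:ℝ≥0∞) ^ (1/p) * (Hfun μ w f (s/2) + Hfun μ w g (s/2)) ^ (1/p)) := by
        rw [ENNReal.mul_rpow_of_nonneg _ _ (by positivity : (0:ℝ) ≤ 1/p)]
    _ ≤ s * ((C:ℝ≥0∞) ^ (1/p) * (2 ^ (1/p) *
          ((Hfun μ w f (s/2)) ^ (1/p) + (Hfun μ w g (s/2)) ^ (1/p)))) :=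
        mul_le_mul_right (mul_le_mul_right
          (add_rpow_le_two_rpow _ _ _ (by positivity)) _) s
    _ = ((C:ℝ≥0∞) ^ (1/p) * 2 ^ (1/p)) *
          (s * (Hfun μ w f (s/2)) ^ (1/p) + s * (Hfun μ w g (s/2)) ^ (1/p)) := by ring
    _ = ((C:ℝ≥0∞) ^ (1/p) * 2 ^ (1/p)) *
          (2 * ((s/2) * (Hfun μ w f (s/2)) ^ (1/p)) + 2 * ((s/2) * (Hfun μ w g (s/2)) ^ (1/p))) := by
        rw [← mul_assoc, ← mul_assoc, hs2]
    _ ≤ ((C:ℝ≥0∞) ^ (1/p) * 2 ^ (1/p)) * (2 * Nf + 2 * Ng) := by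
        exact mul_le_mul_right (add_le_add (mul_le_mul_right hf2 2) (mul_le_mul_right hg2 2)) _
    _ = ((C:ℝ≥0∞) ^ (1/p) * 2 ^ (1/p) * 2) * (Nf + Ng) := by ring

lemma measurable_phi (f : α → ℝ) (c e : ℝ) :
    Measurable (fun u : ℝ =>
      ENNReal.ofReal (u ^ c) * (Hfun μ w f (ENNReal.ofReal u)) ^ e) := by
  apply Measurable.mul
  · exact (measurable_id'.pow_const _).ennreal_ofReal
  · exact (((Hfun_anti μ w f).comp_monotone
      (fun a b hab => ENNReal.ofReal_le_ofReal hab)).measurable).pow_const _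

lemma Hfun_two_smul (f : α → ℝ) (s : ℝ≥0∞) :
    Hfun μ w (((2:ℝ) • f)) s = Hfun μ w f (s/2) := by
  rw [Hfun, Hfun]
  have hset : {x | s < ENNReal.ofReal |(((2:ℝ) • f)) x|}
      = {x | s / 2 < ENNReal.ofReal |f x|} := by
    ext x
    simp only [mem_setOf_eq, Pi.smul_apply, smul_eq_mul]
    have habs : |2 * f x| = 2 * |f x| := by rw [abs_mul]; norm_num
    rw [habs, ENNReal.ofReal_mul (by norm_num : (0:ℝ) ≤ 2)]
    rw [ENNReal.ofReal_ofNat]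
    rw [ENNReal.div_lt_iff (Or.inl (by norm_num)) (Or.inl (by norm_num)), mul_comm]
  rw [hset]

include hC in
lemma triangle_fin (hp : 0 < p) (q : ℝ≥0∞) (hq : 0 < q) (hqt : q ≠ ⊤)
    (f g : α → ℝ) (hf : Measurable f) (hg : Measurable g) :
    lamNorm μ w p q (f + g) ≤
      ((((C:ℝ≥0∞) ^ (q.toReal/p) * 2 ^ (q.toReal/p)) * 2 ^ q.toReal) ^ (1/q.toReal)
        * 2 ^ (1/q.toReal)) *
      (lamNorm μ w p q f + lamNorm μ w p q g) := by
  have hqr : 0 < q.toReal := ENNReal.toReal_pos hq.ne' hqt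
  set e := q.toReal / p with he
  have hepos : 0 < e := by positivity
  set K1 : ℝ≥0∞ := (C:ℝ≥0∞) ^ e * 2 ^ e with hK1
  have hK1ne : K1 ≠ ⊤ := by
    apply ENNReal.mul_ne_top
    · exact ENNReal.rpow_ne_top_of_nonneg hepos.le ENNReal.coe_ne_top
    · exact ENNReal.rpow_ne_top_of_nonneg hepos.le (by norm_num)
  set Φ : (α → ℝ) → ℝ≥0∞ := fun h => ∫⁻ u in Ioi (0:ℝ),
    ENNReal.ofReal (u ^ (q.toReal - 1)) * (Hfun μ w h (ENNReal.ofReal u)) ^ e with hΦ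
  have hrep : ∀ h : α → ℝ, lamNorm μ w p q h = (ENNReal.ofReal p * Φ h) ^ (1/q.toReal) :=
    fun h => lamNorm_eq_finite μ w p q h hp hq hqt
  -- pointwise bound
  have hpt : ∀ u : ℝ,
      ENNReal.ofReal (u ^ (q.toReal - 1)) * (Hfun μ w (f + g) (ENNReal.ofReal u)) ^ e
      ≤ K1 * (ENNReal.ofReal (u ^ (q.toReal - 1)) * (Hfun μ w (((2:ℝ) • f)) (ENNReal.ofReal u)) ^ e
          + ENNReal.ofReal (u ^ (q.toReal - 1)) * (Hfun μ w (((2:ℝ) • g)) (ENNReal.ofReal u)) ^ e) := by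
    intro u
    have h1 : (Hfun μ w (f + g) (ENNReal.ofReal u)) ^ e
        ≤ K1 * ((Hfun μ w (((2:ℝ) • f)) (ENNReal.ofReal u)) ^ e
            + (Hfun μ w (((2:ℝ) • g)) (ENNReal.ofReal u)) ^ e) := by
      calc (Hfun μ w (f + g) (ENNReal.ofReal u)) ^ e
          ≤ ((C:ℝ≥0∞) * (Hfun μ w f (ENNReal.ofReal u / 2)
              + Hfun μ w g (ENNReal.ofReal u / 2))) ^ e :=
            ENNReal.rpow_le_rpow (Hfun_add_le μ w C hC f g hf hg _) hepos.le
        _ = (C:ℝ≥0∞) ^ e * (Hfun μ w f (ENNReal.ofReal u / 2)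
              + Hfun μ w g (ENNReal.ofReal u / 2)) ^ e :=
            ENNReal.mul_rpow_of_nonneg _ _ hepos.le
        _ ≤ (C:ℝ≥0∞) ^ e * (2 ^ e * ((Hfun μ w f (ENNReal.ofReal u / 2)) ^ e
              + (Hfun μ w g (ENNReal.ofReal u / 2)) ^ e)) :=
            mul_le_mul_right (add_rpow_le_two_rpow _ _ _ hepos.le) _
        _ = K1 * ((Hfun μ w f (ENNReal.ofReal u / 2)) ^ e
              + (Hfun μ w g (ENNReal.ofReal u / 2)) ^ e) := by rw [hK1]; ring
        _ = K1 * ((Hfun μ w (((2:ℝ) • f)) (ENNReal.ofReal u)) ^ e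
              + (Hfun μ w (((2:ℝ) • g)) (ENNReal.ofReal u)) ^ e) := by
            rw [Hfun_two_smul μ w f, Hfun_two_smul μ w g]
    calc ENNReal.ofReal (u ^ (q.toReal - 1)) * (Hfun μ w (f + g) (ENNReal.ofReal u)) ^ e
        ≤ ENNReal.ofReal (u ^ (q.toReal - 1)) * (K1 * ((Hfun μ w (((2:ℝ) • f)) (ENNReal.ofReal u)) ^ e
            + (Hfun μ w (((2:ℝ) • g)) (ENNReal.ofReal u)) ^ e)) := mul_le_mul_right h1 _
      _ = K1 * (ENNReal.ofReal (u ^ (q.toReal - 1)) * (Hfun μ w (((2:ℝ) • f)) (ENNReal.ofReal u)) ^ e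
            + ENNReal.ofReal (u ^ (q.toReal - 1)) * (Hfun μ w (((2:ℝ) • g)) (ENNReal.ofReal u)) ^ e) := by
          ring
  -- integrate
  have hint : Φ (f + g) ≤ K1 * (Φ (((2:ℝ) • f)) + Φ (((2:ℝ) • g))) := by
    rw [hΦ]
    calc ∫⁻ u in Ioi (0:ℝ), ENNReal.ofReal (u ^ (q.toReal - 1)) *
          (Hfun μ w (f + g) (ENNReal.ofReal u)) ^ e
        ≤ ∫⁻ u in Ioi (0:ℝ), K1 *
            (ENNReal.ofReal (u ^ (q.toReal - 1)) * (Hfun μ w (((2:ℝ) • f)) (ENNReal.ofReal u)) ^ e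
            + ENNReal.ofReal (u ^ (q.toReal - 1)) * (Hfun μ w (((2:ℝ) • g)) (ENNReal.ofReal u)) ^ e) :=
          lintegral_mono fun u => hpt u
      _ = K1 * (∫⁻ u in Ioi (0:ℝ),
            (ENNReal.ofReal (u ^ (q.toReal - 1)) * (Hfun μ w (((2:ℝ) • f)) (ENNReal.ofReal u)) ^ e
            + ENNReal.ofReal (u ^ (q.toReal - 1)) * (Hfun μ w (((2:ℝ) • g)) (ENNReal.ofReal u)) ^ e)) :=
          lintegral_const_mul' _ _ hK1ne
      _ = K1 * (Φ (((2:ℝ) • f)) + Φ (((2:ℝ) • g))) := by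
          rw [lintegral_add_left (measurable_phi μ w (((2:ℝ) • f)) _ _)]
  -- scaling identity
  have hsc : ∀ h : α → ℝ, ENNReal.ofReal p * Φ (((2:ℝ) • h)) = 2 ^ q.toReal * (ENNReal.ofReal p * Φ h) := by
    intro h
    have e2 : lamNorm μ w p q (((2:ℝ) • h)) = 2 * lamNorm μ w p q h := by
      rw [show ((2:ℝ) • h) = ((2:ℝ) • h) from rfl, lamNorm_smul μ w p q hp hq h 2]
      norm_num
    have e1 := hrep (((2:ℝ) • h))
    have e3 := hrep h
    rw [e3] at e2
    rw [e2] at e1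
    have := congrArg (fun x : ℝ≥0∞ => x ^ q.toReal) e1
    rw [ENNReal.mul_rpow_of_nonneg _ _ hqr.le, one_div, ENNReal.rpow_inv_rpow hqr.ne',
      ENNReal.rpow_inv_rpow hqr.ne'] at this
    exact this.symm
  -- conclude
  rw [hrep (f + g), hrep f, hrep g]
  calc (ENNReal.ofReal p * Φ (f + g)) ^ (1/q.toReal)
      ≤ (ENNReal.ofReal p * (K1 * (Φ (((2:ℝ) • f)) + Φ (((2:ℝ) • g))))) ^ (1/q.toReal) :=
        ENNReal.rpow_le_rpow (mul_le_mul_right hint _) (by positivity)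
    _ = (K1 * (ENNReal.ofReal p * Φ (((2:ℝ) • f)) + ENNReal.ofReal p * Φ (((2:ℝ) • g)))) ^ (1/q.toReal) := by
        congr 1
        ring
    _ = (K1 * 2 ^ q.toReal * ((ENNReal.ofReal p * Φ f) + (ENNReal.ofReal p * Φ g))) ^ (1/q.toReal) := by
        rw [hsc f, hsc g]
        congr 1
        ring
    _ = (K1 * 2 ^ q.toReal) ^ (1/q.toReal) *
          ((ENNReal.ofReal p * Φ f) + (ENNReal.ofReal p * Φ g)) ^ (1/q.toReal) :=
        ENNReal.mul_rpow_of_nonneg _ _ (by positivity)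
    _ ≤ (K1 * 2 ^ q.toReal) ^ (1/q.toReal) *
          (2 ^ (1/q.toReal) * ((ENNReal.ofReal p * Φ f) ^ (1/q.toReal)
            + (ENNReal.ofReal p * Φ g) ^ (1/q.toReal))) :=
        mul_le_mul_right (add_rpow_le_two_rpow _ _ _ (by positivity)) _
    _ = ((K1 * 2 ^ q.toReal) ^ (1/q.toReal) * 2 ^ (1/q.toReal)) *
          ((ENNReal.ofReal p * Φ f) ^ (1/q.toReal) + (ENNReal.ofReal p * Φ g) ^ (1/q.toReal)) := by
        ring

end backward

/-- `‖·‖_{Λ^{p,q}_X(w)}` is a quasi-norm iff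
`0 < W(μ(A∪B)) ≤ C(W(μ A) + W(μ B))` for all measurable `A, B` with `μ(A∪B) > 0`. -/
theorem stmt9 {α : Type*} [MeasurableSpace α] (μ : Measure α) [SigmaFinite μ]
    (w : ℝ → ℝ≥0∞) (hw : Measurable w) (p : ℝ) (hp : 0 < p)
    (q : ℝ≥0∞) (hq : 0 < q) :
    ((∀ f : α → ℝ, Measurable f → lamNorm μ w p q f = 0 → f =ᵐ[μ] 0) ∧
     (∀ (f : α → ℝ) (c : ℝ),
        lamNorm μ w p q (c • f) = ENNReal.ofReal |c| * lamNorm μ w p q f) ∧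
     (∃ C : ℝ≥0, ∀ f g : α → ℝ, Measurable f → Measurable g →
        lamNorm μ w p q (f + g) ≤ C * (lamNorm μ w p q f + lamNorm μ w p q g))) ↔
    ∃ C : ℝ≥0, ∀ A B : Set α, MeasurableSet A → MeasurableSet B → μ (A ∪ B) ≠ 0 →
      Wfun w (μ (A ∪ B)) ≠ 0 ∧ Wfun w (μ (A ∪ B)) ≤ C * (Wfun w (μ A) + Wfun w (μ B)) := by
  constructor
  · rintro ⟨h0, -, C, hC3⟩
    obtain ⟨κ, hκ0, hκt, hκ⟩ := lamNorm_indicator μ w p q hp hq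
    refine ⟨((C:ℝ≥0∞) ^ p * 2 ^ p).toNNReal, fun A B hA hB hAB => ?_⟩
    have hcoe : (((C:ℝ≥0∞) ^ p * 2 ^ p).toNNReal : ℝ≥0∞) = (C:ℝ≥0∞) ^ p * 2 ^ p :=
      ENNReal.coe_toNNReal (ENNReal.mul_ne_top
        (ENNReal.rpow_ne_top_of_nonneg hp.le ENNReal.coe_ne_top)
        (ENNReal.rpow_ne_top_of_nonneg hp.le (by norm_num)))
    have hmono : lamNorm μ w p q ((A ∪ B).indicator fun _ => (1:ℝ))
        ≤ lamNorm μ w p q ((A.indicator fun _ => (1:ℝ)) + (B.indicator fun _ => (1:ℝ))) := by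
      apply lamNorm_mono
      intro x
      by_cases hxA : x ∈ A <;> by_cases hxB : x ∈ B <;>
        simp [Set.indicator_apply, hxA, hxB, Set.mem_union, Pi.add_apply] <;> norm_num
    have h3 := hC3 (A.indicator fun _ => (1:ℝ)) (B.indicator fun _ => (1:ℝ))
      (measurable_const.indicator hA) (measurable_const.indicator hB)
    have hch : κ * (Wfun w (μ (A ∪ B))) ^ (1/p)
        ≤ κ * ((C:ℝ≥0∞) * ((Wfun w (μ A)) ^ (1/p) + (Wfun w (μ B)) ^ (1/p))) := by
      calc κ * (Wfun w (μ (A ∪ B))) ^ (1/p)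
          = lamNorm μ w p q ((A ∪ B).indicator fun _ => (1:ℝ)) := (hκ (A ∪ B)).symm
        _ ≤ lamNorm μ w p q ((A.indicator fun _ => (1:ℝ)) + (B.indicator fun _ => (1:ℝ))) := hmono
        _ ≤ C * (lamNorm μ w p q (A.indicator fun _ => (1:ℝ))
              + lamNorm μ w p q (B.indicator fun _ => (1:ℝ))) := h3
        _ = κ * ((C:ℝ≥0∞) * ((Wfun w (μ A)) ^ (1/p) + (Wfun w (μ B)) ^ (1/p))) := by
            rw [hκ A, hκ B]; ring
    have hineq := (ENNReal.mul_le_mul_iff_right hκ0 hκt).1 hch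
    constructor
    · intro hW0
      have hlam0 : lamNorm μ w p q ((A ∪ B).indicator fun _ => (1:ℝ)) = 0 := by
        rw [hκ (A ∪ B), hW0, ENNReal.zero_rpow_of_pos (by positivity), mul_zero]
      have hae := h0 _ (measurable_const.indicator (hA.union hB)) hlam0
      have hμ0 : μ (A ∪ B) = 0 := by
        have hset : {a | ¬ ((A ∪ B).indicator (fun _ => (1:ℝ)) a = (0 : α → ℝ) a)} = A ∪ B := by
          ext x
          by_cases hx : x ∈ A ∪ B <;>
            simp only [Set.indicator_apply, hx, if_true, if_false, Pi.zero_apply,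
              mem_setOf_eq, mem_union] <;>
            simp [Set.mem_union] at hx ⊢ <;> tauto
        have := ae_iff.1 hae
        rwa [hset] at this
      exact hAB hμ0
    · rw [hcoe]
      calc Wfun w (μ (A ∪ B)) = ((Wfun w (μ (A ∪ B))) ^ (1/p)) ^ p := by
            rw [one_div, ENNReal.rpow_inv_rpow hp.ne']
        _ ≤ ((C:ℝ≥0∞) * ((Wfun w (μ A)) ^ (1/p) + (Wfun w (μ B)) ^ (1/p))) ^ p :=
            ENNReal.rpow_le_rpow hineq hp.le
        _ = (C:ℝ≥0∞) ^ p * (((Wfun w (μ A)) ^ (1/p) + (Wfun w (μ B)) ^ (1/p))) ^ p :=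
            ENNReal.mul_rpow_of_nonneg _ _ hp.le
        _ ≤ (C:ℝ≥0∞) ^ p * (2 ^ p * (((Wfun w (μ A)) ^ (1/p)) ^ p
              + ((Wfun w (μ B)) ^ (1/p)) ^ p)) :=
            mul_le_mul_right (add_rpow_le_two_rpow _ _ _ hp.le) _
        _ = (C:ℝ≥0∞) ^ p * 2 ^ p * (Wfun w (μ A) + Wfun w (μ B)) := by
            rw [one_div, ENNReal.rpow_inv_rpow hp.ne', ENNReal.rpow_inv_rpow hp.ne']
            ring
  · rintro ⟨C, hC⟩
    refine ⟨fun f hf h0 => nondeg_backward μ w p C hC hp q hq f hf h0,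
      fun f c => lamNorm_smul μ w p q hp hq f c, ?_⟩
    by_cases hqt : q = ⊤
    · subst hqt
      refine ⟨((C:ℝ≥0∞) ^ (1/p) * 2 ^ (1/p) * 2).toNNReal, fun f g hf hg => ?_⟩
      have hfin : (C:ℝ≥0∞) ^ (1/p) * 2 ^ (1/p) * 2 ≠ ⊤ := by
        apply ENNReal.mul_ne_top
        · apply ENNReal.mul_ne_top
          · exact ENNReal.rpow_ne_top_of_nonneg (by positivity) ENNReal.coe_ne_top
          · exact ENNReal.rpow_ne_top_of_nonneg (by positivity) (by norm_num)
        · norm_num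
      rw [ENNReal.coe_toNNReal hfin]
      exact triangle_top μ w p C hC hp f g hf hg
    · have hqr : 0 < q.toReal := ENNReal.toReal_pos hq.ne' hqt
      refine ⟨((((C:ℝ≥0∞) ^ (q.toReal/p) * 2 ^ (q.toReal/p)) * 2 ^ q.toReal) ^ (1/q.toReal)
          * 2 ^ (1/q.toReal)).toNNReal, fun f g hf hg => ?_⟩
      have hfin : (((C:ℝ≥0∞) ^ (q.toReal/p) * 2 ^ (q.toReal/p)) * 2 ^ q.toReal) ^ (1/q.toReal)
          * 2 ^ (1/q.toReal) ≠ ⊤ := by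
        apply ENNReal.mul_ne_top
        · apply ENNReal.rpow_ne_top_of_nonneg (by positivity)
          apply ENNReal.mul_ne_top
          · apply ENNReal.mul_ne_top
            · exact ENNReal.rpow_ne_top_of_nonneg (by positivity) ENNReal.coe_ne_top
            · exact ENNReal.rpow_ne_top_of_nonneg (by positivity) (by norm_num)
          · exact ENNReal.rpow_ne_top_of_nonneg (by positivity) (by norm_num)
        · exact ENNReal.rpow_ne_top_of_nonneg (by positivity) (by norm_num)
      rw [ENNReal.coe_toNNReal hfin]
      exact triangle_fin μ w p C hC hp q hq hqt f g hf hg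
end

section
/- Let X be a σ-finite measure space with μ(X) = ∞, w ∈ L¹(0,∞) a weight, and 0 < p < ∞ such that Λ^p_X(w) is quasi-normed. Then Λ^p_X(w) does not have absolutely continuous norm: specifically the constant function 1 lies in Λ^p_X(w) and there is a decreasing sequence of measurable sets (E_n) with χ_{E_n} → 0 a.e. but ‖χ_{E_n}‖_{Λ^p(w)} = ‖w‖₁^{1/p} for all n. -/
open MeasureTheory Set
open scoped ENNReal

open scoped NNReal

/-- The `Λ^p(w)` functional. -/
noncomputable def lamP {α : Type*} [MeasurableSpace α] (μ : Measure α)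
    (w : ℝ → ℝ≥0∞) (p : ℝ) (f : α → ℝ) : ℝ≥0∞ :=
  (∫⁻ t in Set.Ioi (0:ℝ), (rearr μ f t) ^ p * w t) ^ (1 / p)

lemma rearr_eq_one {α : Type*} [MeasurableSpace α] (μ : Measure α) (f : α → ℝ)
    (hf : ∀ x, |f x| = 1 ∨ f x = 0) (hμ : μ {x | f x ≠ 0} = ⊤) (t : ℝ) :
    rearr μ f t = 1 := by
  have hset : {s : ℝ≥0∞ | μ {x | s < ENNReal.ofReal |f x|} ≤ ENNReal.ofReal t} = Set.Ici 1 := by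
    ext s
    simp only [Set.mem_setOf_eq, Set.mem_Ici]
    constructor
    · intro h
      by_contra hs
      push_neg at hs
      have hsub : {x | f x ≠ 0} ⊆ {x | s < ENNReal.ofReal |f x|} := by
        intro x hx
        rcases hf x with h1 | h0
        · simp [Set.mem_setOf_eq, h1, hs]
        · exact absurd h0 hx
      have : (⊤ : ℝ≥0∞) ≤ ENNReal.ofReal t := by
        calc (⊤ : ℝ≥0∞) = μ {x | f x ≠ 0} := hμ.symm
        _ ≤ μ {x | s < ENNReal.ofReal |f x|} := measure_mono hsub
        _ ≤ ENNReal.ofReal t := h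
      exact (ENNReal.ofReal_ne_top) (top_le_iff.mp this)
    · intro hs
      have : {x | s < ENNReal.ofReal |f x|} = ∅ := by
        ext x
        simp only [Set.mem_setOf_eq, Set.mem_empty_iff_false, iff_false, not_lt]
        rcases hf x with h1 | h0
        · simpa [h1] using hs
        · simp [h0]
      simp [this]
  rw [rearr, hset]
  exact csInf_Ici

lemma lamP_eq {α : Type*} [MeasurableSpace α] (μ : Measure α) (w : ℝ → ℝ≥0∞) (p : ℝ)
    (f : α → ℝ) (hf : ∀ x, |f x| = 1 ∨ f x = 0) (hμ : μ {x | f x ≠ 0} = ⊤) :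
    lamP μ w p f = (∫⁻ t in Set.Ioi (0:ℝ), w t) ^ (1 / p) := by
  unfold lamP
  congr 1
  refine lintegral_congr fun t => ?_
  rw [rearr_eq_one μ f hf hμ, ENNReal.one_rpow, one_mul]

/-- If `μ(X) = ∞`, `w ∈ L¹(0,∞)`, and `Λ^p_X(w)` is quasi-normed, then `Λ^p_X(w)` fails
absolute continuity of the norm: the constant function `1` lies in `Λ^p_X(w)` and there is
a decreasing sequence of measurable sets `Eₙ` with `χ_{Eₙ} → 0` a.e. but
`‖χ_{Eₙ}‖_{Λ^p(w)} = ‖w‖₁^{1/p}` for all `n`. -/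
theorem stmt11 {α : Type*} [MeasurableSpace α] (μ : Measure α) [SigmaFinite μ]
    (hμ : μ Set.univ = ⊤) (w : ℝ → ℝ≥0∞) (hw : Measurable w)
    (hwL1 : (∫⁻ t in Set.Ioi (0:ℝ), w t) ≠ ⊤) (p : ℝ) (hp : 0 < p)
    (hΔ : ∃ C : ℝ≥0, ∀ A B : Set α, MeasurableSet A → MeasurableSet B → μ (A ∪ B) ≠ 0 →
      Wfun w (μ (A ∪ B)) ≠ 0 ∧ Wfun w (μ (A ∪ B)) ≤ C * (Wfun w (μ A) + Wfun w (μ B))) :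
    lamP μ w p (fun _ => 1) ≠ ⊤ ∧
    ∃ E : ℕ → Set α, (∀ n, MeasurableSet (E n)) ∧ Antitone E ∧
      (∀ᵐ x ∂μ, Filter.Tendsto (fun n => (E n).indicator (fun _ => (1:ℝ)) x)
        Filter.atTop (nhds 0)) ∧
      ∀ n, lamP μ w p ((E n).indicator fun _ => (1:ℝ)) =
        (∫⁻ t in Set.Ioi (0:ℝ), w t) ^ (1 / p) := by
  constructor
  · rw [lamP_eq μ w p _ (fun x => Or.inl (by norm_num))
      (by simpa using hμ)]
    exact ENNReal.rpow_ne_top_of_nonneg (by positivity) hwL1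
  · refine ⟨fun n => (spanningSets μ n)ᶜ, fun n => (measurableSet_spanningSets μ n).compl, ?_, ?_, ?_⟩
    · exact fun m n h => compl_subset_compl.mpr (monotone_spanningSets μ h)
    · refine Filter.Eventually.of_forall fun x => ?_
      obtain ⟨N, hN⟩ : ∃ N, x ∈ spanningSets μ N := by
        have : x ∈ ⋃ n, spanningSets μ n := by rw [iUnion_spanningSets]; trivial
        exact mem_iUnion.mp this
      refine tendsto_const_nhds.congr' ?_
      filter_upwards [Filter.eventually_ge_atTop N] with n hn
      have : x ∉ (spanningSets μ n)ᶜ := fun h => h (monotone_spanningSets μ hn hN)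
      simp [Set.indicator_of_notMem this]
    · intro n
      have htop : μ (spanningSets μ n)ᶜ = ⊤ := by
        have h1 : μ (spanningSets μ n ∪ (spanningSets μ n)ᶜ) ≤
            μ (spanningSets μ n) + μ (spanningSets μ n)ᶜ := measure_union_le _ _
        rw [Set.union_compl_self, hμ] at h1
        rcases ENNReal.add_eq_top.mp (top_le_iff.mp h1) with h | h
        · exact absurd h (measure_spanningSets_lt_top μ n).ne
        · exact h
      refine lamP_eq μ w p _ (fun x => ?_) ?_
      · by_cases hx : x ∈ (spanningSets μ n)ᶜ
        · left; rw [Set.indicator_of_mem hx]; norm_num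
        · right; exact Set.indicator_of_notMem hx _
      · convert htop using 2
        ext x
        by_cases hx : x ∈ spanningSets μ n <;>
          simp [Set.indicator_apply, Set.mem_compl_iff, hx]
end
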